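/- arXiv:2406.08968 — 10 statements merged into one kernel-verified Lean document; each statement's English description precedes it below -/
import Mathlib

section
/- Suppose the noise-correlation event holds, i.e., (2/n)|∑_{i=1}^n ε_i X_{ij}| ≤ λ for every j ∈ {1,…,p}. Then any Lasso solution β̂ satisfies, for every β ∈ ℝ^p with support J(β) = {j : β_j ≠ 0}: (1/n)‖X(β̂ − β*)‖₂² + λ‖β̂ − β‖₁ ≤ (1/n)‖X(β − β*)‖₂² + 4λ ∑_{j∈J(β)} |β̂_j − β_j| ≤ (1/n)‖X(β − β*)‖₂² + 4λ √(|J(β)|) · √(∑_{j∈J(β)} (β̂_j − β_j)²). -/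
open Finset

/-- Basic Lasso inequalities on the noise-correlation event. -/
theorem lasso_basic_inequalities
    (n p : ℕ) (hn : 0 < n) (hp : 0 < p)
    (X : Matrix (Fin n) (Fin p) ℝ)
    (βstar : Fin p → ℝ) (ε : Fin n → ℝ)
    (lam : ℝ) (hlam : 0 < lam)
    (Y : Fin n → ℝ) (hY : ∀ i, Y i = (∑ j, X i j * βstar j) + ε i)
    (βhat : Fin p → ℝ)
    (hβhat : ∀ β : Fin p → ℝ,
      (1 / n) * ∑ i, (Y i - ∑ j, X i j * βhat j) ^ 2 + 2 * lam * ∑ j, |βhat j|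
        ≤ (1 / n) * ∑ i, (Y i - ∑ j, X i j * β j) ^ 2 + 2 * lam * ∑ j, |β j|)
    (hnoise : ∀ j, (2 / n) * |∑ i, ε i * X i j| ≤ lam) :
    ∀ β : Fin p → ℝ,
      ((1 / n) * ∑ i, (∑ j, X i j * (βhat j - βstar j)) ^ 2
          + lam * ∑ j, |βhat j - β j|
        ≤ (1 / n) * ∑ i, (∑ j, X i j * (β j - βstar j)) ^ 2
          + 4 * lam * ∑ j ∈ univ.filter (fun j => β j ≠ 0), |βhat j - β j|)
      ∧
      ((1 / n) * ∑ i, (∑ j, X i j * (β j - βstar j)) ^ 2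
          + 4 * lam * ∑ j ∈ univ.filter (fun j => β j ≠ 0), |βhat j - β j|
        ≤ (1 / n) * ∑ i, (∑ j, X i j * (β j - βstar j)) ^ 2
          + 4 * lam * Real.sqrt ((univ.filter (fun j => β j ≠ 0)).card)
              * Real.sqrt (∑ j ∈ univ.filter (fun j => β j ≠ 0), (βhat j - β j) ^ 2)) := by
  intro β
  have hn' : (0:ℝ) < n := by exact_mod_cast hn
  set J := univ.filter (fun j : Fin p => β j ≠ 0) with hJ
  -- expansion key
  have key : ∀ γ : Fin p → ℝ, ∑ i, (Y i - ∑ j, X i j * γ j) ^ 2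
      = ∑ i, (ε i) ^ 2 - 2 * ∑ j, (γ j - βstar j) * (∑ i, ε i * X i j)
        + ∑ i, (∑ j, X i j * (γ j - βstar j)) ^ 2 := by
    intro γ
    have h1 : ∀ i, Y i - ∑ j, X i j * γ j = ε i - ∑ j, X i j * (γ j - βstar j) := by
      intro i
      rw [hY i]
      simp only [mul_sub, Finset.sum_sub_distrib]
      ring
    have swap : ∑ i, ε i * ∑ j, X i j * (γ j - βstar j)
        = ∑ j, (γ j - βstar j) * (∑ i, ε i * X i j) := by
      simp_rw [Finset.mul_sum]
      rw [Finset.sum_comm]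
      exact Finset.sum_congr rfl fun j _ => Finset.sum_congr rfl fun i _ => by ring
    calc ∑ i, (Y i - ∑ j, X i j * γ j) ^ 2
        = ∑ i, ((ε i) ^ 2 - 2 * (ε i * ∑ j, X i j * (γ j - βstar j))
            + (∑ j, X i j * (γ j - βstar j)) ^ 2) := by
          exact Finset.sum_congr rfl fun i _ => by rw [h1 i]; ring
      _ = ∑ i, (ε i) ^ 2 - 2 * ∑ i, (ε i * ∑ j, X i j * (γ j - βstar j))
            + ∑ i, (∑ j, X i j * (γ j - βstar j)) ^ 2 := by
          rw [Finset.sum_add_distrib, Finset.sum_sub_distrib, ← Finset.mul_sum]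
      _ = _ := by rw [swap]
  -- the basic inequality from optimality + noise
  have hopt := hβhat β
  rw [key βhat, key β] at hopt
  have noise_bound : ∑ j, (βhat j - β j) * ((2 / n) * (∑ i, ε i * X i j))
      ≤ lam * ∑ j, |βhat j - β j| := by
    rw [Finset.mul_sum]
    apply Finset.sum_le_sum
    intro j _
    calc (βhat j - β j) * ((2 / n) * (∑ i, ε i * X i j))
        ≤ |(βhat j - β j) * ((2 / n) * (∑ i, ε i * X i j))| := le_abs_self _
      _ = |βhat j - β j| * ((2 / n) * |∑ i, ε i * X i j|) := by
          rw [abs_mul, abs_mul, abs_of_nonneg (by positivity : (0:ℝ) ≤ 2 / (n:ℝ))]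
      _ ≤ |βhat j - β j| * lam := by
          exact mul_le_mul_of_nonneg_left (hnoise j) (abs_nonneg _)
      _ = lam * |βhat j - β j| := by ring
  -- rewrite hopt
  have basic : (1 / n) * ∑ i, (∑ j, X i j * (βhat j - βstar j)) ^ 2 + 2 * lam * ∑ j, |βhat j|
      ≤ (1 / n) * ∑ i, (∑ j, X i j * (β j - βstar j)) ^ 2 + 2 * lam * ∑ j, |β j|
        + lam * ∑ j, |βhat j - β j| := by
    have h2 : (2 / (n:ℝ)) * (∑ j, (βhat j - βstar j) * (∑ i, ε i * X i j)
          - ∑ j, (β j - βstar j) * (∑ i, ε i * X i j))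
        = ∑ j, (βhat j - β j) * ((2 / n) * (∑ i, ε i * X i j)) := by
      rw [← Finset.sum_sub_distrib, Finset.mul_sum]
      exact Finset.sum_congr rfl fun j _ => by ring
    set E := ∑ i, (ε i) ^ 2 with hE
    set Sh := ∑ j, (βhat j - βstar j) * (∑ i, ε i * X i j) with hSh
    set Sb := ∑ j, (β j - βstar j) * (∑ i, ε i * X i j) with hSb
    set Qh := ∑ i, (∑ j, X i j * (βhat j - βstar j)) ^ 2 with hQh
    set Qb := ∑ i, (∑ j, X i j * (β j - βstar j)) ^ 2 with hQb
    have hr : (2/(n:ℝ)) = 2 * (1/(n:ℝ)) := by ring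
    simp only [hr] at h2 noise_bound
    set r := 1/(n:ℝ) with hrr
    linarith [hopt, noise_bound, h2]
  -- pointwise support bound
  have support_bound : 2 * (∑ j, |β j|) - 2 * (∑ j, |βhat j|) + 2 * ∑ j, |βhat j - β j|
      ≤ 4 * ∑ j ∈ J, |βhat j - β j| := by
    have hfil : ∑ j ∈ J, |βhat j - β j|
        = ∑ j, (if β j ≠ 0 then |βhat j - β j| else 0) := by
      rw [hJ, Finset.sum_filter]
    rw [hfil]
    simp only [Finset.mul_sum, ← Finset.sum_sub_distrib, ← Finset.sum_add_distrib]
    apply Finset.sum_le_sum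
    intro j _
    by_cases hb : β j = 0
    · simp [hb]
    · rw [if_pos hb]
      have h1 := abs_sub_abs_le_abs_sub (β j) (βhat j)
      have h3 : |β j - βhat j| = |βhat j - β j| := abs_sub_comm _ _
      linarith
  constructor
  · nlinarith [basic, support_bound, hlam]
  · have cs : ∑ j ∈ J, |βhat j - β j|
        ≤ Real.sqrt (J.card) * Real.sqrt (∑ j ∈ J, (βhat j - β j) ^ 2) := by
      rw [← Real.sqrt_mul (by positivity)]
      rw [Real.le_sqrt (by positivity) (by positivity)]
      calc (∑ j ∈ J, |βhat j - β j|) ^ 2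
          ≤ (J.card : ℝ) * ∑ j ∈ J, |βhat j - β j| ^ 2 := by
            exact_mod_cast sq_sum_le_card_mul_sum_sq (s := J) (f := fun j => |βhat j - β j|)
        _ = (J.card : ℝ) * ∑ j ∈ J, (βhat j - β j) ^ 2 := by
            congr 1; exact Finset.sum_congr rfl fun j _ => sq_abs _
    nlinarith [cs, hlam]
end

section
/- Suppose the noise-correlation event holds, i.e., (2/n)|∑_{i=1}^n ε_i X_{ij}| ≤ λ for every j ∈ {1,…,p}. Then any Lasso solution β̂ satisfies the cone condition: the error vector δ = β̂ − β* obeys ‖δ_{(J*)^c}‖₁ ≤ 3‖δ_{J*}‖₁. -/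
open Finset

/-- On the noise-correlation event, any Lasso solution satisfies the cone condition
`‖δ_{(J*)^c}‖₁ ≤ 3 ‖δ_{J*}‖₁` for the error vector `δ = β̂ − β*`. -/
theorem lasso_cone_condition
    (n p : ℕ) (hn : 0 < n) (hp : 0 < p)
    (X : Matrix (Fin n) (Fin p) ℝ)
    (βstar : Fin p → ℝ) (ε : Fin n → ℝ)
    (lam : ℝ) (hlam : 0 < lam)
    (Y : Fin n → ℝ) (hY : ∀ i, Y i = (∑ j, X i j * βstar j) + ε i)
    (βhat : Fin p → ℝ)
    (hβhat : ∀ β : Fin p → ℝ,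
      (1 / n) * ∑ i, (Y i - ∑ j, X i j * βhat j) ^ 2 + 2 * lam * ∑ j, |βhat j|
        ≤ (1 / n) * ∑ i, (Y i - ∑ j, X i j * β j) ^ 2 + 2 * lam * ∑ j, |β j|)
    (hnoise : ∀ j, (2 / n) * |∑ i, ε i * X i j| ≤ lam) :
    ∑ j ∈ univ.filter (fun j => βstar j = 0), |βhat j - βstar j|
      ≤ 3 * ∑ j ∈ univ.filter (fun j => βstar j ≠ 0), |βhat j - βstar j| := by
  have hnpos : (0:ℝ) < n := by exact_mod_cast hn
  set δ : Fin p → ℝ := fun j => βhat j - βstar j with hδdef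
  set S : Fin n → ℝ := fun i => ∑ j, X i j * δ j with hSdef
  set A : ℝ := ∑ j ∈ univ.filter (fun j => βstar j = 0), |βhat j - βstar j| with hA
  set B : ℝ := ∑ j ∈ univ.filter (fun j => βstar j ≠ 0), |βhat j - βstar j| with hB
  have key := hβhat βstar
  have h1 : ∀ i, Y i - ∑ j, X i j * βhat j = ε i - S i := by
    intro i
    rw [hY i, hSdef]
    simp only [hδdef, mul_sub, Finset.sum_sub_distrib]
    ring
  have h2 : ∀ i, Y i - ∑ j, X i j * βstar j = ε i := by
    intro i; rw [hY i]; ring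
  simp only [h1, h2] at key
  -- expand the square
  have hsq : ∑ i, (ε i - S i) ^ 2
      = ∑ i, ε i ^ 2 - 2 * ∑ i, ε i * S i + ∑ i, S i ^ 2 := by
    calc ∑ i, (ε i - S i) ^ 2
        = ∑ i, (ε i ^ 2 - 2 * (ε i * S i) + S i ^ 2) :=
          Finset.sum_congr rfl fun i _ => by ring
      _ = ∑ i, ε i ^ 2 - 2 * ∑ i, ε i * S i + ∑ i, S i ^ 2 := by
          rw [Finset.sum_add_distrib, Finset.sum_sub_distrib, Finset.mul_sum]
  rw [hsq] at key
  -- basic inequality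
  have key2 : (1 / (n:ℝ)) * ∑ i, S i ^ 2
      ≤ (2 / n) * ∑ i, ε i * S i + 2 * lam * (∑ j, |βstar j| - ∑ j, |βhat j|) := by
    have : (1 / (n:ℝ)) * (∑ i, ε i ^ 2 - 2 * ∑ i, ε i * S i + ∑ i, S i ^ 2)
        = (1/n) * ∑ i, ε i ^ 2 - (2/n) * ∑ i, ε i * S i + (1/n) * ∑ i, S i ^ 2 := by
      ring
    rw [this] at key
    linarith
  -- swap sums
  have hswap : ∑ i, ε i * S i = ∑ j, (∑ i, ε i * X i j) * δ j := by
    simp only [hSdef, Finset.mul_sum]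
    rw [Finset.sum_comm]
    refine Finset.sum_congr rfl fun j _ => ?_
    rw [Finset.sum_mul]
    exact Finset.sum_congr rfl fun i _ => by ring
  -- bound the cross term
  have hcross : (2 / (n:ℝ)) * ∑ i, ε i * S i ≤ lam * ∑ j, |δ j| := by
    rw [hswap, Finset.mul_sum, Finset.mul_sum]
    refine Finset.sum_le_sum fun j _ => ?_
    have h2n : (0:ℝ) ≤ 2 / n := by positivity
    calc (2 / (n:ℝ)) * ((∑ i, ε i * X i j) * δ j)
        ≤ (2 / n) * (|∑ i, ε i * X i j| * |δ j|) := by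
          apply mul_le_mul_of_nonneg_left _ h2n
          rw [← abs_mul]
          exact le_abs_self _
      _ = (2 / n) * |∑ i, ε i * X i j| * |δ j| := by ring
      _ ≤ lam * |δ j| := mul_le_mul_of_nonneg_right (hnoise j) (abs_nonneg _)
  -- split ∑ |δ| into A + B
  have hsplit : ∑ j, |δ j| = A + B := by
    rw [hA, hB]
    exact (Finset.sum_filter_add_sum_filter_not univ (fun j => βstar j = 0)
      (fun j => |βhat j - βstar j|)).symm
  -- bound the ℓ¹ difference
  have hl1 : ∑ j, |βstar j| - ∑ j, |βhat j| ≤ B - A := by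
    have e1 : ∑ j, |βstar j|
        = ∑ j ∈ univ.filter (fun j => βstar j = 0), |βstar j|
          + ∑ j ∈ univ.filter (fun j => βstar j ≠ 0), |βstar j| :=
      (Finset.sum_filter_add_sum_filter_not univ _ _).symm
    have e2 : ∑ j, |βhat j|
        = ∑ j ∈ univ.filter (fun j => βstar j = 0), |βhat j|
          + ∑ j ∈ univ.filter (fun j => βstar j ≠ 0), |βhat j| :=
      (Finset.sum_filter_add_sum_filter_not univ _ _).symm
    have e3 : ∑ j ∈ univ.filter (fun j => βstar j = 0), |βstar j| = 0 := by
      refine Finset.sum_eq_zero fun j hj => ?_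
      simp only [Finset.mem_filter] at hj
      simp [hj.2]
    have e4 : ∑ j ∈ univ.filter (fun j => βstar j = 0), |βhat j| = A := by
      rw [hA]
      refine Finset.sum_congr rfl fun j hj => ?_
      simp only [Finset.mem_filter] at hj
      rw [hj.2, sub_zero]
    have e5 : ∑ j ∈ univ.filter (fun j => βstar j ≠ 0), (|βstar j| - |βhat j|) ≤ B := by
      rw [hB]
      refine Finset.sum_le_sum fun j _ => ?_
      calc |βstar j| - |βhat j| ≤ |βstar j - βhat j| := abs_sub_abs_le_abs_sub _ _
        _ = |βhat j - βstar j| := abs_sub_comm _ _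
    rw [Finset.sum_sub_distrib] at e5
    rw [e1, e2, e3, e4]
    linarith
  -- nonnegativity of quadratic term
  have hS2 : (0:ℝ) ≤ (1 / (n:ℝ)) * ∑ i, S i ^ 2 := by positivity
  -- combine
  have hfinal : lam * A ≤ lam * (3 * B) := by nlinarith [key2, hcross, hsplit, hl1, hS2]
  exact le_of_mul_le_mul_left hfinal hlam
end

section
/- Suppose the noise-correlation event holds, i.e., (2/n)|∑_{i=1}^n ε_i X_{ij}| ≤ λ for every j ∈ {1,…,p}, and suppose X satisfies the restricted eigenvalue condition over J* with constant κ > 0. Then any Lasso solution β̂ satisfies ‖(β̂ − β*)_{J*}‖₂ ≤ 4λ√s/κ² and ‖β̂ − β*‖₁ ≤ 16λs/κ². -/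
open Finset

set_option maxHeartbeats 1000000

/-- On the noise-correlation event, under the restricted eigenvalue condition over `J*`
with constant `κ > 0`, any Lasso solution satisfies
`‖(β̂ − β*)_{J*}‖₂ ≤ 4λ√s/κ²` and `‖β̂ − β*‖₁ ≤ 16λs/κ²`. -/
theorem lasso_estimation_error
    (n p : ℕ) (hn : 0 < n) (hp : 0 < p)
    (X : Matrix (Fin n) (Fin p) ℝ)
    (βstar : Fin p → ℝ) (ε : Fin n → ℝ)
    (lam : ℝ) (hlam : 0 < lam)
    (Y : Fin n → ℝ) (hY : ∀ i, Y i = (∑ j, X i j * βstar j) + ε i)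
    (βhat : Fin p → ℝ)
    (hβhat : ∀ β : Fin p → ℝ,
      (1 / n) * ∑ i, (Y i - ∑ j, X i j * βhat j) ^ 2 + 2 * lam * ∑ j, |βhat j|
        ≤ (1 / n) * ∑ i, (Y i - ∑ j, X i j * β j) ^ 2 + 2 * lam * ∑ j, |β j|)
    (hnoise : ∀ j, (2 / n) * |∑ i, ε i * X i j| ≤ lam)
    (κ : ℝ) (hκ : 0 < κ)
    (hRE : ∀ δ : Fin p → ℝ,
      (∑ j ∈ univ.filter (fun j => βstar j = 0), |δ j|)
        ≤ 3 * ∑ j ∈ univ.filter (fun j => βstar j ≠ 0), |δ j| →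
      Real.sqrt n * κ * Real.sqrt (∑ j ∈ univ.filter (fun j => βstar j ≠ 0), δ j ^ 2)
        ≤ Real.sqrt (∑ i, (∑ j, X i j * δ j) ^ 2)) :
    Real.sqrt (∑ j ∈ univ.filter (fun j => βstar j ≠ 0), (βhat j - βstar j) ^ 2)
      ≤ 4 * lam * Real.sqrt ((univ.filter (fun j => βstar j ≠ 0)).card) / κ ^ 2
    ∧ ∑ j, |βhat j - βstar j|
        ≤ 16 * lam * ((univ.filter (fun j => βstar j ≠ 0)).card : ℝ) / κ ^ 2 := by
  classical
  have hnr : (0:ℝ) < (n:ℝ) := by exact_mod_cast hn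
  set J : Finset (Fin p) := univ.filter (fun j => βstar j ≠ 0) with hJdef
  set Jc : Finset (Fin p) := univ.filter (fun j => βstar j = 0) with hJcdef
  -- abbreviations
  set a : ℝ := ∑ j ∈ J, |βhat j - βstar j| with hadef
  set b : ℝ := ∑ j ∈ Jc, |βhat j - βstar j| with hbdef
  set q : ℝ := ∑ j ∈ J, (βhat j - βstar j) ^ 2 with hqdef
  set s : ℝ := (J.card : ℝ) with hsdef
  set C : ℝ := ∑ i, (∑ j, X i j * (βhat j - βstar j)) ^ 2 with hCdef
  set B : ℝ := ∑ i, ε i * ∑ j, X i j * (βhat j - βstar j) with hBdef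
  set A : ℝ := ∑ i, (ε i) ^ 2 with hAdef
  set D : ℝ := ∑ j, |βhat j| with hDdef
  set E : ℝ := ∑ j, |βstar j| with hEdef
  have hq0 : 0 ≤ q := Finset.sum_nonneg fun j _ => sq_nonneg _
  have hC0 : 0 ≤ C := Finset.sum_nonneg fun i _ => sq_nonneg _
  have ha0 : 0 ≤ a := Finset.sum_nonneg fun j _ => abs_nonneg _
  have hb0 : 0 ≤ b := Finset.sum_nonneg fun j _ => abs_nonneg _
  have hs0 : 0 ≤ s := Nat.cast_nonneg _
  -- residual identities
  have hres2 : ∀ i, Y i - ∑ j, X i j * βstar j = ε i := fun i => by rw [hY]; ring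
  have hsub : ∀ i, ∑ j, X i j * (βhat j - βstar j)
      = (∑ j, X i j * βhat j) - ∑ j, X i j * βstar j := fun i => by
    rw [← Finset.sum_sub_distrib]
    exact Finset.sum_congr rfl fun j _ => by ring
  have hres1 : ∀ i, Y i - ∑ j, X i j * βhat j
      = ε i - ∑ j, X i j * (βhat j - βstar j) := fun i => by
    rw [hY, hsub]; ring
  have hB1 := hβhat βstar
  simp only [hres1, hres2] at hB1
  have hexp : ∑ i, (ε i - ∑ j, X i j * (βhat j - βstar j)) ^ 2 = A - 2 * B + C := by
    rw [hAdef, hBdef, hCdef, Finset.mul_sum, ← Finset.sum_sub_distrib,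
      ← Finset.sum_add_distrib]
    exact Finset.sum_congr rfl fun i _ => by ring
  rw [hexp] at hB1
  -- hB1 : 1/n * (A - 2B + C) + 2 lam D ≤ 1/n * A + 2 lam E
  have hring : (1/(n:ℝ)) * (A - 2*B + C) = (1/n)*A - (2/n)*B + (1/n)*C := by ring
  rw [hring] at hB1
  -- bound on the correlation term
  have hBswap : B = ∑ j, (∑ i, ε i * X i j) * (βhat j - βstar j) := by
    rw [hBdef]
    simp_rw [Finset.mul_sum]
    rw [Finset.sum_comm]
    exact Finset.sum_congr rfl fun j _ => by
      rw [Finset.sum_mul]; exact Finset.sum_congr rfl fun i _ => by ring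
  have hcorr : (2/(n:ℝ)) * B ≤ lam * ∑ j, |βhat j - βstar j| := by
    rw [hBswap, Finset.mul_sum, Finset.mul_sum]
    apply Finset.sum_le_sum
    intro j _
    have h2n : (0:ℝ) ≤ 2/(n:ℝ) := by positivity
    calc (2/(n:ℝ)) * ((∑ i, ε i * X i j) * (βhat j - βstar j))
        ≤ (2/(n:ℝ)) * |(∑ i, ε i * X i j) * (βhat j - βstar j)| :=
          mul_le_mul_of_nonneg_left (le_abs_self _) h2n
      _ = ((2/(n:ℝ)) * |∑ i, ε i * X i j|) * |βhat j - βstar j| := by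
          rw [abs_mul]; ring
      _ ≤ lam * |βhat j - βstar j| :=
          mul_le_mul_of_nonneg_right (hnoise j) (abs_nonneg _)
  have habs_split : ∑ j, |βhat j - βstar j| = b + a := by
    rw [hadef, hbdef, hJdef, hJcdef]
    rw [← Finset.sum_filter_add_sum_filter_not univ (fun j => βstar j = 0)
      (fun j => |βhat j - βstar j|)]
  -- E - D ≤ a - b
  have hE0 : ∑ j ∈ Jc, |βstar j| = 0 :=
    Finset.sum_eq_zero fun j hj => by
      rw [(Finset.mem_filter.mp hj).2, abs_zero]
  have hEsplit : E = ∑ j ∈ J, |βstar j| := by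
    rw [hEdef, ← Finset.sum_filter_add_sum_filter_not univ (fun j => βstar j = 0)
      (fun j => |βstar j|)]
    rw [← hJcdef] at *
    rw [hE0, zero_add]
  have hDsplit : D = b + ∑ j ∈ J, |βhat j| := by
    rw [hDdef, ← Finset.sum_filter_add_sum_filter_not univ (fun j => βstar j = 0)
      (fun j => |βhat j|)]
    congr 1
    rw [hbdef]
    exact Finset.sum_congr rfl fun j hj => by
      rw [(Finset.mem_filter.mp hj).2, sub_zero]
  have haJ : ∑ j ∈ J, |βstar j| - ∑ j ∈ J, |βhat j| ≤ a := by
    rw [hadef, ← Finset.sum_sub_distrib]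
    apply Finset.sum_le_sum
    intro j _
    have h1 := abs_sub_abs_le_abs_sub (βstar j) (βhat j)
    rw [abs_sub_comm] at h1
    linarith
  have hnorm : E - D ≤ a - b := by rw [hEsplit, hDsplit]; linarith
  -- key inequality : (1/n) C ≤ 3 lam a - lam b
  have hkey : (1/(n:ℝ)) * C ≤ 3 * (lam * a) - lam * b := by
    have h1 : (2/(n:ℝ)) * B ≤ lam * b + lam * a := by
      rw [mul_add] at *
      calc (2/(n:ℝ)) * B ≤ lam * ∑ j, |βhat j - βstar j| := hcorr
        _ = lam * (b + a) := by rw [habs_split]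
        _ = lam * b + lam * a := by ring
    have h2 : 2 * lam * (E - D) ≤ 2 * lam * (a - b) :=
      mul_le_mul_of_nonneg_left hnorm (by linarith)
    nlinarith [hB1]
  -- cone condition
  have hcone : b ≤ 3 * a := by
    have h2 : 0 ≤ (1/(n:ℝ)) * C := by positivity
    have h1 : lam * b ≤ lam * (3*a) := by linarith [hkey, h2]
    exact le_of_mul_le_mul_left h1 hlam
  -- restricted eigenvalue
  have hREd := hRE (fun j => βhat j - βstar j) (by simpa using hcone)
  have hREd' : Real.sqrt n * κ * Real.sqrt q ≤ Real.sqrt C := by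
    simpa using hREd
  have hREsq : (n:ℝ) * κ^2 * q ≤ C := by
    have hlhs0 : 0 ≤ Real.sqrt n * κ * Real.sqrt q := by positivity
    have h1 := mul_self_le_mul_self hlhs0 hREd'
    have e1 : Real.sqrt C * Real.sqrt C = C := Real.mul_self_sqrt hC0
    have e2 : Real.sqrt q * Real.sqrt q = q := Real.mul_self_sqrt hq0
    have e3 : Real.sqrt n * Real.sqrt n = (n:ℝ) := Real.mul_self_sqrt (le_of_lt hnr)
    have h2 : Real.sqrt n * κ * Real.sqrt q * (Real.sqrt n * κ * Real.sqrt q)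
        = (Real.sqrt n * Real.sqrt n) * κ^2 * (Real.sqrt q * Real.sqrt q) := by ring
    rw [h2, e1, e2, e3] at h1
    exact h1
  -- Cauchy-Schwarz : a^2 ≤ s * q
  have hCS : a^2 ≤ s * q := by
    have h1 := sq_sum_le_card_mul_sum_sq (s := J) (f := fun j => |βhat j - βstar j|)
    have h2 : ∑ j ∈ J, |βhat j - βstar j| ^ 2 = q := by
      rw [hqdef]; exact Finset.sum_congr rfl fun j _ => sq_abs _
    rw [h2] at h1
    exact_mod_cast h1
  have ha_le : a ≤ Real.sqrt s * Real.sqrt q := by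
    have : a ≤ Real.sqrt (s * q) := by
      rw [← Real.sqrt_sq ha0]
      exact Real.sqrt_le_sqrt hCS
    rwa [Real.sqrt_mul hs0] at this
  -- κ² q ≤ 3 lam a
  have hqa : κ^2 * q ≤ 3 * (lam * a) := by
    have h1 : κ^2 * q ≤ (1/(n:ℝ)) * C := by
      rw [one_div, inv_mul_eq_div, le_div_iff₀ hnr]
      linarith [hREsq]
    have h2 : 0 ≤ lam * b := mul_nonneg hlam.le hb0
    linarith [hkey, h1, h2]
  -- first bound
  have hsq : Real.sqrt q ≤ 4 * lam * Real.sqrt s / κ^2 := by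
    rw [le_div_iff₀ (pow_pos hκ 2)]
    have hqeq : Real.sqrt q * Real.sqrt q = q := Real.mul_self_sqrt hq0
    have hls : 0 ≤ lam * Real.sqrt s := mul_nonneg hlam.le (Real.sqrt_nonneg s)
    rcases eq_or_lt_of_le (Real.sqrt_nonneg q) with h0 | hpos
    · rw [← h0]
      nlinarith [hls]
    · have hc : (κ^2 * Real.sqrt q) * Real.sqrt q ≤ (3 * (lam * Real.sqrt s)) * Real.sqrt q := by
        have h1 : 3 * (lam * a) ≤ 3 * (lam * (Real.sqrt s * Real.sqrt q)) := by
          have := mul_le_mul_of_nonneg_left ha_le hlam.le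
          linarith
        calc (κ^2 * Real.sqrt q) * Real.sqrt q = κ^2 * q := by
              rw [mul_assoc, hqeq]
          _ ≤ 3 * (lam * a) := hqa
          _ ≤ 3 * (lam * (Real.sqrt s * Real.sqrt q)) := h1
          _ = (3 * (lam * Real.sqrt s)) * Real.sqrt q := by ring
      have h2 : κ^2 * Real.sqrt q ≤ 3 * (lam * Real.sqrt s) :=
        le_of_mul_le_mul_right hc hpos
      nlinarith [hls, h2]
  constructor
  · exact hsq
  · -- ℓ¹ bound
    have hss : Real.sqrt s * Real.sqrt s = s := Real.mul_self_sqrt hs0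
    have h4a : ∑ j, |βhat j - βstar j| ≤ 4 * a := by
      rw [habs_split]; linarith
    have ha2 : a ≤ 4 * lam * s / κ^2 := by
      calc a ≤ Real.sqrt s * Real.sqrt q := ha_le
        _ ≤ Real.sqrt s * (4 * lam * Real.sqrt s / κ^2) :=
            mul_le_mul_of_nonneg_left hsq (Real.sqrt_nonneg s)
        _ = 4 * lam * (Real.sqrt s * Real.sqrt s) / κ^2 := by ring
        _ = 4 * lam * s / κ^2 := by rw [hss]
    calc ∑ j, |βhat j - βstar j| ≤ 4 * a := h4a
      _ ≤ 4 * (4 * lam * s / κ^2) := by linarith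
      _ = 16 * lam * s / κ^2 := by ring
end

section
/- Let β̂, β* ∈ ℝ^p and l > 0. If ‖β̂ − β*‖₁ < l and |β*_j| ≥ 2l for every j with β*_j ≠ 0, then the thresholded set {j ∈ {1,…,p} : |β̂_j| ≥ l} equals the support {j : β*_j ≠ 0} of β*. -/
/-- If `‖β̂ − β*‖₁ < l` and every nonzero coordinate of `β*` has absolute value at least `2l`,
then thresholding `β̂` at level `l` exactly recovers the support of `β*`. -/
theorem threshold_support_recovery
    (p : ℕ) (βhat βstar : Fin p → ℝ) (l : ℝ) (hl : 0 < l)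
    (h1 : ∑ j, |βhat j - βstar j| < l)
    (h2 : ∀ j, βstar j ≠ 0 → 2 * l ≤ |βstar j|) :
    {j : Fin p | l ≤ |βhat j|} = {j : Fin p | βstar j ≠ 0} := by
  ext j
  have hterm : |βhat j - βstar j| < l := by
    refine lt_of_le_of_lt ?_ h1
    exact Finset.single_le_sum (f := fun i => |βhat i - βstar i|) (fun i _ => abs_nonneg _) (Finset.mem_univ j)
  simp only [Set.mem_setOf_eq]
  constructor
  · intro h hz
    rw [hz] at hterm
    simp at hterm
    linarith
  · intro h
    have := h2 j h
    have := abs_sub_abs_le_abs_sub (βstar j) (βhat j)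
    rw [abs_sub_comm] at this
    linarith
end

section
/- Suppose the noise-correlation event holds, i.e., (2/n)|∑_{i=1}^n ε_i X_{ij}| ≤ λ for every j ∈ {1,…,p}, suppose X satisfies the restricted eigenvalue condition over J* with constant κ > 0, and suppose the minimal signal condition |β*_j| > 32λs/κ² holds for every j ∈ J*. Then any Lasso solution β̂ exactly recovers the support by thresholding: {j ∈ {1,…,p} : |β̂_j| > 16λs/κ²} = J*. -/
open Finset

/-- On the noise-correlation event, under the restricted eigenvalue condition over `J*`
with constant `κ > 0` and the minimal signal condition `|β*_j| > 32λs/κ²` for all `j ∈ J*`,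
any Lasso solution recovers the support exactly by thresholding at level `16λs/κ²`. -/
theorem lasso_support_recovery
    (n p : ℕ) (hn : 0 < n) (hp : 0 < p)
    (X : Matrix (Fin n) (Fin p) ℝ)
    (βstar : Fin p → ℝ) (ε : Fin n → ℝ)
    (lam : ℝ) (hlam : 0 < lam)
    (Y : Fin n → ℝ) (hY : ∀ i, Y i = (∑ j, X i j * βstar j) + ε i)
    (βhat : Fin p → ℝ)
    (hβhat : ∀ β : Fin p → ℝ,
      (1 / n) * ∑ i, (Y i - ∑ j, X i j * βhat j) ^ 2 + 2 * lam * ∑ j, |βhat j|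
        ≤ (1 / n) * ∑ i, (Y i - ∑ j, X i j * β j) ^ 2 + 2 * lam * ∑ j, |β j|)
    (hnoise : ∀ j, (2 / n) * |∑ i, ε i * X i j| ≤ lam)
    (κ : ℝ) (hκ : 0 < κ)
    (hRE : ∀ δ : Fin p → ℝ,
      (∑ j ∈ univ.filter (fun j => βstar j = 0), |δ j|)
        ≤ 3 * ∑ j ∈ univ.filter (fun j => βstar j ≠ 0), |δ j| →
      Real.sqrt n * κ * Real.sqrt (∑ j ∈ univ.filter (fun j => βstar j ≠ 0), δ j ^ 2)
        ≤ Real.sqrt (∑ i, (∑ j, X i j * δ j) ^ 2))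
    (hsignal : ∀ j, βstar j ≠ 0 →
      32 * lam * ((univ.filter (fun j => βstar j ≠ 0)).card : ℝ) / κ ^ 2 < |βstar j|) :
    {j : Fin p |
        16 * lam * ((univ.filter (fun j => βstar j ≠ 0)).card : ℝ) / κ ^ 2 < |βhat j|}
      = {j : Fin p | βstar j ≠ 0} := by
  classical
  have hn' : (0:ℝ) < n := by exact_mod_cast hn
  set J : Finset (Fin p) := univ.filter (fun j => βstar j ≠ 0) with hJdef
  set Jc : Finset (Fin p) := univ.filter (fun j => βstar j = 0) with hJcdef
  set s : ℝ := (J.card : ℝ) with hsdef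
  have hs0 : 0 ≤ s := Nat.cast_nonneg _
  set δ : Fin p → ℝ := fun j => βhat j - βstar j with hδdef
  set S : Fin n → ℝ := fun i => ∑ j, X i j * δ j with hSdef
  set A : ℝ := ∑ j ∈ J, |δ j| with hAdef
  set B : ℝ := ∑ j ∈ Jc, |δ j| with hBdef
  have hA0 : 0 ≤ A := Finset.sum_nonneg fun j _ => abs_nonneg _
  have hB0 : 0 ≤ B := Finset.sum_nonneg fun j _ => abs_nonneg _
  -- split of the full ℓ¹ norm
  have hsplit : ∑ j, |δ j| = A + B := by
    rw [hAdef, hBdef, hJdef, hJcdef]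
    rw [← Finset.sum_filter_add_sum_filter_not univ (fun j => βstar j ≠ 0) (fun j => |δ j|)]
    congr 1
    apply Finset.sum_congr _ (fun _ _ => rfl)
    apply Finset.filter_congr
    intro j _
    simp [not_not]
  -- rewrite Xβ̂ in terms of Xβ* and Xδ
  have hXδ : ∀ i, (∑ j, X i j * βhat j) = (∑ j, X i j * βstar j) + S i := by
    intro i
    rw [hSdef, ← Finset.sum_add_distrib]
    apply Finset.sum_congr rfl
    intro j _
    simp [hδdef]; ring
  -- basic inequality
  have key := hβhat βstar
  simp only [hY, hXδ] at key
  have hresid1 : ∀ i, (∑ j, X i j * βstar j) + ε i - ((∑ j, X i j * βstar j) + S i)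
      = ε i - S i := by intro i; ring
  have hresid2 : ∀ i, (∑ j, X i j * βstar j) + ε i - (∑ j, X i j * βstar j) = ε i := by
    intro i; ring
  simp only [hresid1, hresid2] at key
  have hexpand : ∑ i, (ε i - S i) ^ 2
      = ∑ i, ε i ^ 2 - 2 * ∑ i, ε i * S i + ∑ i, S i ^ 2 := by
    have h : ∀ i : Fin n, (ε i - S i) ^ 2 = ε i ^ 2 - 2 * (ε i * S i) + S i ^ 2 :=
      fun i => by ring
    simp only [h, Finset.sum_add_distrib, Finset.sum_sub_distrib, ← Finset.mul_sum]
  rw [hexpand] at key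
  have hbasic : (1 / (n:ℝ)) * ∑ i, S i ^ 2
      ≤ (2 / n) * ∑ i, ε i * S i + 2 * lam * ((∑ j, |βstar j|) - ∑ j, |βhat j|) := by
    have h2n : (2 / (n:ℝ)) * ∑ i, ε i * S i = (1/(n:ℝ)) * (2 * ∑ i, ε i * S i) := by ring
    nlinarith [key, mul_pos (by positivity : (0:ℝ) < 1/(n:ℝ)) hn']
  -- noise bound
  have hswap : ∑ i, ε i * S i = ∑ j, (∑ i, ε i * X i j) * δ j := by
    simp only [hSdef, Finset.mul_sum, Finset.sum_mul, mul_assoc]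
    exact Finset.sum_comm
  have hnb : (2 / (n:ℝ)) * ∑ i, ε i * S i ≤ lam * ∑ j, |δ j| := by
    rw [hswap, Finset.mul_sum, Finset.mul_sum]
    apply Finset.sum_le_sum
    intro j _
    calc 2 / (n:ℝ) * ((∑ i, ε i * X i j) * δ j)
        ≤ |2 / (n:ℝ) * ((∑ i, ε i * X i j) * δ j)| := le_abs_self _
      _ = (2 / (n:ℝ) * |∑ i, ε i * X i j|) * |δ j| := by
          rw [abs_mul, abs_mul, abs_of_nonneg (by positivity : (0:ℝ) ≤ 2/(n:ℝ))]
          ring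
      _ ≤ lam * |δ j| := mul_le_mul_of_nonneg_right (hnoise j) (abs_nonneg _)
  -- ℓ¹ comparison of the penalties
  have hpen : (∑ j, |βstar j|) - (∑ j, |βhat j|) ≤ A - B := by
    have h1 : ∑ j, |βstar j| = ∑ j ∈ J, |βstar j| := by
      rw [hJdef]
      rw [← Finset.sum_filter_add_sum_filter_not univ (fun j => βstar j ≠ 0)
        (fun j => |βstar j|)]
      have : ∑ j ∈ univ.filter (fun j => ¬ βstar j ≠ 0), |βstar j| = 0 := by
        apply Finset.sum_eq_zero
        intro j hj
        simp only [Finset.mem_filter, not_not] at hj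
        simp [hj.2]
      rw [this, add_zero]
    have h2 : ∑ j, |βhat j| = (∑ j ∈ J, |βhat j|) + ∑ j ∈ Jc, |βhat j| := by
      rw [hJdef, hJcdef]
      rw [← Finset.sum_filter_add_sum_filter_not univ (fun j => βstar j ≠ 0)
        (fun j => |βhat j|)]
      congr 1
      apply Finset.sum_congr _ (fun _ _ => rfl)
      apply Finset.filter_congr
      intro j _
      simp [not_not]
    have h3 : ∑ j ∈ Jc, |βhat j| = B := by
      rw [hBdef]
      apply Finset.sum_congr rfl
      intro j hj
      simp only [hJcdef, Finset.mem_filter] at hj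
      simp [hδdef, hj.2]
    have h4 : (∑ j ∈ J, |βstar j|) - (∑ j ∈ J, |βhat j|) ≤ A := by
      rw [hAdef, ← Finset.sum_sub_distrib]
      apply Finset.sum_le_sum
      intro j _
      have := abs_sub_abs_le_abs_sub (βstar j) (βhat j)
      have h5 : |βstar j - βhat j| = |δ j| := by
        rw [hδdef]; simp [abs_sub_comm]
      linarith [this, h5.le]
    rw [h1, h2, h3]
    linarith
  -- combine
  have hS2 : (0:ℝ) ≤ (1 / (n:ℝ)) * ∑ i, S i ^ 2 := by positivity
  have hcomb : (1 / (n:ℝ)) * ∑ i, S i ^ 2 ≤ 3 * lam * A - lam * B := by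
    rw [hsplit] at hnb
    have hmul := mul_le_mul_of_nonneg_left hpen (by positivity : (0:ℝ) ≤ 2 * lam)
    linarith
  have hcone : B ≤ 3 * A := by nlinarith
  -- restricted eigenvalue
  set Q : ℝ := ∑ j ∈ J, δ j ^ 2 with hQdef
  have hQ0 : 0 ≤ Q := Finset.sum_nonneg fun j _ => sq_nonneg _
  have hre' := hRE δ (by rw [hAdef, hBdef] at hcone; exact hcone)
  have hre : Real.sqrt n * κ * Real.sqrt Q ≤ Real.sqrt (∑ i, S i ^ 2) := by
    simpa only [hQdef, hSdef] using hre'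
  have hre2 : (n:ℝ) * κ^2 * Q ≤ ∑ i, S i ^ 2 := by
    have hL : (0:ℝ) ≤ Real.sqrt n * κ * Real.sqrt Q := by positivity
    have h := mul_self_le_mul_self hL hre
    have e1 : Real.sqrt (n:ℝ) * Real.sqrt (n:ℝ) = (n:ℝ) :=
      Real.mul_self_sqrt hn'.le
    have e2 : Real.sqrt Q * Real.sqrt Q = Q := Real.mul_self_sqrt hQ0
    have e3 : Real.sqrt (∑ i, S i ^ 2) * Real.sqrt (∑ i, S i ^ 2) = ∑ i, S i ^ 2 :=
      Real.mul_self_sqrt (Finset.sum_nonneg fun i _ => sq_nonneg _)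
    have e4 : (Real.sqrt n * κ * Real.sqrt Q) * (Real.sqrt n * κ * Real.sqrt Q)
        = (Real.sqrt n * Real.sqrt n) * (κ * κ) * (Real.sqrt Q * Real.sqrt Q) := by ring
    rw [e4, e1, e2, e3] at h
    linarith [h]
  have hκQ : κ^2 * Q ≤ 3 * lam * A := by
    have hd : (1/(n:ℝ)) * ((n:ℝ) * κ^2 * Q) ≤ (1/(n:ℝ)) * ∑ i, S i ^ 2 :=
      mul_le_mul_of_nonneg_left hre2 (by positivity)
    have he : (1/(n:ℝ)) * ((n:ℝ) * κ^2 * Q) = κ^2 * Q := by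
      field_simp
    have hlB : 0 ≤ lam * B := mul_nonneg hlam.le hB0
    linarith [hd, he, hcomb, hlB]
  -- Cauchy–Schwarz on J
  have hCS : A ^ 2 ≤ s * Q := by
    have := sq_sum_le_card_mul_sum_sq (s := J) (f := fun j => |δ j|)
    simp only [sq_abs] at this
    rw [hAdef, hsdef, hQdef]
    exact_mod_cast this
  -- ℓ¹ bound on δ restricted to J
  clear_value A B Q s
  have hA3 : A ≤ 3 * lam * s / κ ^ 2 := by
    rcases eq_or_lt_of_le hA0 with h0 | h0
    · rw [← h0]
      apply div_nonneg _ (sq_nonneg κ)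
      have := mul_nonneg hlam.le hs0
      linarith
    · rw [le_div_iff₀ (by positivity : (0:ℝ) < κ ^ 2)]
      have k1 : s * (κ ^ 2 * Q) ≤ s * (3 * lam * A) :=
        mul_le_mul_of_nonneg_left hκQ hs0
      have k2 : κ ^ 2 * A ^ 2 ≤ κ ^ 2 * (s * Q) :=
        mul_le_mul_of_nonneg_left hCS (sq_nonneg κ)
      have hfin : (A * κ ^ 2) * A ≤ (3 * lam * s) * A := by linarith [k1, k2]
      exact le_of_mul_le_mul_right hfin h0
  have hl1 : ∑ j, |δ j| ≤ 12 * lam * s / κ ^ 2 := by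
    rw [hsplit]
    have : 3 * lam * s / κ ^ 2 * 4 = 12 * lam * s / κ ^ 2 := by ring
    linarith
  -- finish
  have hjb : ∀ j, |δ j| ≤ 12 * lam * s / κ ^ 2 := by
    intro j
    refine le_trans ?_ hl1
    exact Finset.single_le_sum (fun k _ => abs_nonneg (δ k)) (Finset.mem_univ j)
  have h1216 : 12 * lam * s / κ ^ 2 ≤ 16 * lam * s / κ ^ 2 := by
    rw [div_le_div_iff₀ (by positivity) (by positivity)]
    have h : 0 ≤ lam * s * κ ^ 2 := mul_nonneg (mul_nonneg hlam.le hs0) (sq_nonneg κ)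
    linarith [h]
  clear_value δ S
  clear key hbasic hnb hpen hcomb hre' hre hre2 hswap hXδ hresid1 hresid2 hexpand hcone
    hκQ hCS hsplit hS2 hβhat hRE hY hnoise hA3 hl1 hA0 hB0 hQ0
  ext j
  simp only [Set.mem_setOf_eq, ← hJdef, ← hsdef]
  constructor
  · intro hj
    by_contra h0
    have h0' : βstar j = 0 := by simpa using h0
    have hb : |βhat j| = |δ j| := by rw [hδdef]; simp [h0']
    have := hjb j
    rw [← hb] at this
    linarith
  · intro hj
    have hsig := hsignal j hj
    have htri : |βstar j| - |βhat j| ≤ |δ j| := by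
      have := abs_sub_abs_le_abs_sub (βstar j) (βhat j)
      have h5 : |βstar j - βhat j| = |δ j| := by rw [hδdef]; simp [abs_sub_comm]
      linarith [this, h5.le]
    have := hjb j
    have h16 : 32 * lam * s / κ ^ 2 - 16 * lam * s / κ ^ 2 = 16 * lam * s / κ ^ 2 := by
      ring
    linarith
end

section
/- For every real γ ≥ 2 there exists a constant c_γ > 0, depending only on γ, such that for every positive integer d and all vectors u, v ∈ ℝ^d: ‖u + v‖₂^γ − ‖u‖₂^γ ≤ γ⟨u, v⟩‖u‖₂^{γ−2} + c_γ(‖v‖₂^γ + ‖v‖₂²‖u‖₂^{γ−2}). -/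
/-! Write `a = ‖u‖`, so that `‖u + v‖² = a²(1 + x)` with `x = (2⟪u, v⟫ + ‖v‖²) / a²`.
If `‖v‖ < ‖u‖` then `x ∈ [-1, 3]` and `a²x² ≤ 9‖v‖²`, and the claim follows from the scalar
second-order bound `(1 + x)^p ≤ 1 + p x + K x²` for `p = γ / 2 ≥ 1`. For `p ≤ 2` this bound is
Bernoulli's inequality for the exponent `p - 1 ≤ 1` multiplied by `1 + x`; larger `p` are reached
one unit at a time, again multiplying by `1 + x`. If `‖u‖ ≤ ‖v‖`, every term is crudely bounded by
a multiple of `‖v‖^γ`. -/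

namespace Real

theorem one_add_rpow_le_of_le_two {p x : ℝ} (hp₁ : 1 ≤ p) (hp₂ : p ≤ 2) (hx : -1 ≤ x) :
    (1 + x) ^ p ≤ 1 + p * x + (p - 1) * x ^ 2 := by
  have hx₀ : 0 ≤ 1 + x := by linarith
  calc (1 + x) ^ p = (1 + x) * (1 + x) ^ (p - 1) := by
        rw [← rpow_one_add' hx₀ (by linarith), add_sub_cancel]
    _ ≤ (1 + x) * (1 + (p - 1) * x) := by
        gcongr
        exact rpow_one_add_le_one_add_mul_self hx (by linarith) (by linarith)
    _ = 1 + p * x + (p - 1) * x ^ 2 := by ring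

theorem one_add_rpow_add_one_le {p K M x : ℝ} (hp : 0 ≤ p) (hK : 0 ≤ K) (hx : -1 ≤ x)
    (hxM : x ≤ M) (h : (1 + x) ^ p ≤ 1 + p * x + K * x ^ 2) :
    (1 + x) ^ (p + 1) ≤ 1 + (p + 1) * x + (p + K * (1 + M)) * x ^ 2 := by
  have hx₀ : 0 ≤ 1 + x := by linarith
  have hcube : K * x ^ 3 ≤ K * M * x ^ 2 := by
    linarith [mul_le_mul_of_nonneg_left hxM (mul_nonneg hK (sq_nonneg x))]
  calc (1 + x) ^ (p + 1) = (1 + x) ^ p * (1 + x) := rpow_add_one' hx₀ (by linarith)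
    _ ≤ (1 + p * x + K * x ^ 2) * (1 + x) := by gcongr
    _ ≤ 1 + (p + 1) * x + (p + K * (1 + M)) * x ^ 2 := by nlinarith [hcube]

theorem exists_one_add_rpow_le {p : ℝ} (hp : 1 ≤ p) {M : ℝ} (hM : -1 ≤ M) :
    ∃ K, 0 ≤ K ∧ ∀ x, -1 ≤ x → x ≤ M → (1 + x) ^ p ≤ 1 + p * x + K * x ^ 2 := by
  suffices ∀ n : ℕ, ∀ p : ℝ, 1 ≤ p → p ≤ n + 2 →
      ∃ K, 0 ≤ K ∧ ∀ x, -1 ≤ x → x ≤ M → (1 + x) ^ p ≤ 1 + p * x + K * x ^ 2 from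
    this ⌈p⌉₊ p hp (by linarith [Nat.le_ceil p])
  intro n
  induction n with
  | zero =>
    intro p hp₁ hp₂
    exact ⟨p - 1, by linarith, fun x hx _ => one_add_rpow_le_of_le_two hp₁ (by simpa using hp₂) hx⟩
  | succ n ih =>
    intro p hp₁ hp₂
    rcases le_or_gt p 2 with hp_le_two | hp_gt_two
    · exact ⟨p - 1, by linarith, fun x hx _ => one_add_rpow_le_of_le_two hp₁ hp_le_two hx⟩
    obtain ⟨K, hK, hbound⟩ := ih (p - 1) (by linarith) (by push_cast at hp₂; linarith)
    refine ⟨p - 1 + K * (1 + M), by nlinarith, fun x hx hxM => ?_⟩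
    simpa using one_add_rpow_add_one_le (by linarith) hK hx hxM (hbound x hx hxM)

theorem rpow_eq_rpow_sub_two_mul_sq {x γ : ℝ} (hx : 0 ≤ x) (hγ : γ ≠ 0) :
    x ^ γ = x ^ (γ - 2) * x ^ 2 := by
  simpa using rpow_add_natCast' hx (y := γ - 2) (n := 2) (by simpa using hγ)

theorem rpow_eq_sq_rpow_half {x : ℝ} (hx : 0 ≤ x) (γ : ℝ) : x ^ γ = (x ^ 2) ^ (γ / 2) := by
  rw [← rpow_natCast_mul hx, Nat.cast_ofNat, mul_div_cancel₀ _ two_ne_zero]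

end Real

open Real

section InnerProductSpace

variable {E : Type*} [NormedAddCommGroup E] [InnerProductSpace ℝ E]

theorem norm_add_rpow_sub_le_of_norm_le {γ : ℝ} (hγ : 2 ≤ γ) {u v : E} (h : ‖u‖ ≤ ‖v‖) :
    ‖u + v‖ ^ γ - ‖u‖ ^ γ ≤ γ * inner ℝ u v * ‖u‖ ^ (γ - 2) + (2 ^ γ + γ) * ‖v‖ ^ γ := by
  have hsum : ‖u + v‖ ^ γ ≤ 2 ^ γ * ‖v‖ ^ γ := by
    rw [← mul_rpow zero_le_two (norm_nonneg v)]
    exact rpow_le_rpow (norm_nonneg _) (by linarith [norm_add_le u v]) (by linarith)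
  have hinner : -(γ * inner ℝ u v * ‖u‖ ^ (γ - 2)) ≤ γ * ‖v‖ ^ γ :=
    calc -(γ * inner ℝ u v * ‖u‖ ^ (γ - 2)) = γ * -inner ℝ u v * ‖u‖ ^ (γ - 2) := by ring
      _ ≤ γ * (‖u‖ * ‖v‖) * ‖u‖ ^ (γ - 2) := by
        gcongr
        exact neg_le.mpr (neg_le_of_abs_le (abs_real_inner_le_norm u v))
      _ ≤ γ * (‖v‖ * ‖v‖) * ‖v‖ ^ (γ - 2) := by gcongr
      _ = γ * ‖v‖ ^ γ := by
        rw [rpow_eq_rpow_sub_two_mul_sq (γ := γ) (norm_nonneg v) (by linarith)]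
        ring
  have hu : 0 ≤ ‖u‖ ^ γ := by positivity
  linarith

theorem norm_add_rpow_sub_le_of_norm_lt {γ K : ℝ} (hK : 0 ≤ K)
    (hbound : ∀ x, -1 ≤ x → x ≤ 3 → (1 + x) ^ (γ / 2) ≤ 1 + γ / 2 * x + K * x ^ 2)
    {u v : E} (h : ‖v‖ < ‖u‖) :
    ‖u + v‖ ^ γ - ‖u‖ ^ γ ≤
      γ * inner ℝ u v * ‖u‖ ^ (γ - 2) + (γ / 2 + 9 * K) * (‖v‖ ^ 2 * ‖u‖ ^ (γ - 2)) := by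
  set a := ‖u‖
  set b := ‖v‖
  set t := inner ℝ u v
  have hb : 0 ≤ b := norm_nonneg v
  have ha : 0 < a := hb.trans_lt h
  have ht : |t| ≤ a * b := abs_real_inner_le_norm u v
  have hdev : |2 * t + b ^ 2| ≤ 3 * (a * b) := by
    have : b ^ 2 ≤ a * b := by nlinarith
    rw [abs_le] at ht ⊢
    constructor <;> nlinarith
  set x := (2 * t + b ^ 2) / a ^ 2
  have hax : a ^ 2 * x = 2 * t + b ^ 2 := mul_div_cancel₀ _ (by positivity)
  have hsq : ‖u + v‖ ^ 2 = a ^ 2 * (1 + x) := by rw [norm_add_sq_real]; linear_combination -hax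
  have hx_lower : -1 ≤ x := by
    have := nonneg_of_mul_nonneg_right (hsq ▸ sq_nonneg ‖u + v‖) (by positivity)
    linarith
  have hx_upper : x ≤ 3 := by
    rw [div_le_iff₀ (by positivity)]
    nlinarith [le_of_abs_le hdev]
  have hx_sq : a ^ 2 * x ^ 2 ≤ 9 * b ^ 2 := by
    have : a ^ 2 * (a ^ 2 * x ^ 2) ≤ a ^ 2 * (9 * b ^ 2) := by
      have := sq_le_sq' (neg_le_of_abs_le hdev) (le_of_abs_le hdev)
      rw [← hax] at this
      linarith
    exact le_of_mul_le_mul_left this (by positivity)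
  have hsplit : a ^ γ = a ^ (γ - 2) * a ^ 2 := by simpa using rpow_add_natCast ha.ne' (γ - 2) 2
  have hpow : ‖u + v‖ ^ γ = a ^ γ * (1 + x) ^ (γ / 2) := by
    rw [rpow_eq_sq_rpow_half (norm_nonneg _), hsq, mul_rpow (by positivity) (by linarith),
      ← rpow_eq_sq_rpow_half ha.le]
  calc ‖u + v‖ ^ γ - a ^ γ = a ^ γ * ((1 + x) ^ (γ / 2) - 1) := by rw [hpow]; ring
    _ ≤ a ^ γ * (γ / 2 * x + K * x ^ 2) := by gcongr; linarith [hbound x hx_lower hx_upper]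
    _ = a ^ (γ - 2) * (γ / 2 * (a ^ 2 * x) + K * (a ^ 2 * x ^ 2)) := by
        rw [hsplit]; ring
    _ ≤ a ^ (γ - 2) * (γ / 2 * (2 * t + b ^ 2) + K * (9 * b ^ 2)) := by rw [hax]; gcongr
    _ = γ * t * a ^ (γ - 2) + (γ / 2 + 9 * K) * (b ^ 2 * a ^ (γ - 2)) := by ring

end InnerProductSpace

/-- For every real `γ ≥ 2` there is a constant `c_γ > 0` such that for all dimensions `d`
and all `u v ∈ ℝ^d`:
`‖u + v‖^γ − ‖u‖^γ ≤ γ⟨u,v⟩‖u‖^{γ−2} + c_γ(‖v‖^γ + ‖v‖²‖u‖^{γ−2})`. -/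
theorem norm_rpow_taylor_inequality :
    ∀ γ : ℝ, 2 ≤ γ → ∃ c : ℝ, 0 < c ∧
      ∀ (d : ℕ) (u v : EuclideanSpace ℝ (Fin d)),
        ‖u + v‖ ^ γ - ‖u‖ ^ γ
          ≤ γ * (inner ℝ u v : ℝ) * ‖u‖ ^ (γ - 2)
            + c * (‖v‖ ^ γ + ‖v‖ ^ (2 : ℕ) * ‖u‖ ^ (γ - 2)) := by
  intro γ hγ
  obtain ⟨K, hK, hbound⟩ :=
    exists_one_add_rpow_le (p := γ / 2) (by linarith) (M := 3) (by norm_num)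
  have h2γ : 0 ≤ (2 : ℝ) ^ γ := by positivity
  refine ⟨2 ^ γ + γ + 9 * K, by positivity, fun d u v => ?_⟩
  have hv : 0 ≤ ‖v‖ ^ γ := by positivity
  have hvu : 0 ≤ ‖v‖ ^ 2 * ‖u‖ ^ (γ - 2) := by positivity
  rcases le_or_gt ‖u‖ ‖v‖ with h | h
  · nlinarith [norm_add_rpow_sub_le_of_norm_le hγ h]
  · nlinarith [norm_add_rpow_sub_le_of_norm_lt hK hbound h]
end

section
/- Let γ > 2, s ≥ 1, and c₀, c > 0. Let (Ω, F, P) be a probability space with a filtration (F_n)_{n≥0}, and let (Λ_n)_{n≥0} be an adapted sequence of random vectors in ℝ^q with E‖Λ_n‖₂^γ < ∞ for all n, satisfying almost surely for every n ≥ 0: E[‖Λ_{n+1}‖₂^γ | F_n] ≤ ‖Λ_n‖₂^γ − γc₀‖Λ_n‖₂^{γ−1} + c(s^{γ/2} + s‖Λ_n‖₂^{γ−2}). Then there exists a constant C > 0, depending only on γ, c₀, and c, such that E‖Λ_n‖₂^γ ≤ E‖Λ_0‖₂^γ + C·n·s^{γ−1} for all n ≥ 0. -/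
open MeasureTheory

lemma key_pointwise (γ s c₀ c : ℝ) (hγ : 2 < γ) (hs : 1 ≤ s) (hc₀ : 0 < c₀) (hc : 0 < c)
    (x : ℝ) (hx : 0 ≤ x) :
    x ^ γ - γ * c₀ * x ^ (γ - 1) + c * (s ^ (γ / 2) + s * x ^ (γ - 2))
      ≤ x ^ γ + (c * (1 + (c / (γ * c₀)) ^ (γ - 2))) * s ^ (γ - 1) := by
  have hγ0 : (0:ℝ) < γ := by linarith
  have hγc₀ : 0 < γ * c₀ := by positivity
  set K : ℝ := c / (γ * c₀) with hK
  have hK0 : 0 < K := by positivity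
  have hs0 : (0:ℝ) < s := by linarith
  have hshalf : s ^ (γ / 2) ≤ s ^ (γ - 1) :=
    Real.rpow_le_rpow_of_exponent_le hs (by linarith)
  rcases le_or_gt x (K * s) with hcase | hcase
  · -- small x : c*s*x^(γ-2) ≤ c*K^(γ-2)*s^(γ-1)
    have h1 : x ^ (γ - 2) ≤ (K * s) ^ (γ - 2) :=
      Real.rpow_le_rpow hx hcase (by linarith)
    have h2 : (K * s) ^ (γ - 2) = K ^ (γ - 2) * s ^ (γ - 2) :=
      Real.mul_rpow hK0.le hs0.le
    have h3 : s * s ^ (γ - 2) = s ^ (γ - 1) := by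
      rw [show s * s ^ (γ - 2) = s ^ (1:ℝ) * s ^ (γ - 2) by rw [Real.rpow_one],
        ← Real.rpow_add hs0]
      ring_nf
    have h4 : s * x ^ (γ - 2) ≤ K ^ (γ - 2) * s ^ (γ - 1) := by
      calc s * x ^ (γ - 2) ≤ s * (K ^ (γ - 2) * s ^ (γ - 2)) := by
            rw [← h2]; exact mul_le_mul_of_nonneg_left h1 hs0.le
        _ = K ^ (γ - 2) * s ^ (γ - 1) := by rw [← h3]; ring
    have h5 : 0 ≤ γ * c₀ * x ^ (γ - 1) := by positivity
    nlinarith [mul_le_mul_of_nonneg_left h4 hc.le,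
      mul_le_mul_of_nonneg_left hshalf hc.le]
  · -- large x : c*s*x^(γ-2) ≤ γ*c₀*x^(γ-1)
    have hx0 : 0 < x := lt_of_le_of_lt (by positivity) hcase
    have h3 : x * x ^ (γ - 2) = x ^ (γ - 1) := by
      rw [show x * x ^ (γ - 2) = x ^ (1:ℝ) * x ^ (γ - 2) by rw [Real.rpow_one],
        ← Real.rpow_add hx0]
      ring_nf
    have hKs : K * s ≤ x := hcase.le
    have hcs : c * s ≤ γ * c₀ * x := by
      have := mul_le_mul_of_nonneg_left hKs hγc₀.le
      rw [hK] at this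
      calc c * s = γ * c₀ * (c / (γ * c₀) * s) := by field_simp
        _ ≤ γ * c₀ * x := this
    have h6 : c * (s * x ^ (γ - 2)) ≤ γ * c₀ * x ^ (γ - 1) := by
      have hxp : 0 ≤ x ^ (γ - 2) := Real.rpow_nonneg hx0.le _
      calc c * (s * x ^ (γ - 2)) = (c * s) * x ^ (γ - 2) := by ring
        _ ≤ (γ * c₀ * x) * x ^ (γ - 2) := mul_le_mul_of_nonneg_right hcs hxp
        _ = γ * c₀ * x ^ (γ - 1) := by rw [mul_assoc, h3]
    have h7 : c * s ^ (γ / 2) ≤ c * s ^ (γ - 1) :=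
      mul_le_mul_of_nonneg_left hshalf hc.le
    have h8 : 0 ≤ c * K ^ (γ - 2) * s ^ (γ - 1) := by positivity
    nlinarith

/-- Drift condition for the `γ`-th moment of the imbalance process implies a linear-in-`n`
bound `E‖Λ_n‖^γ ≤ E‖Λ_0‖^γ + C n s^{γ−1}`. -/
theorem imbalance_gamma_moment_bound
    {Ω : Type*} {m0 : MeasurableSpace Ω} (μ : Measure Ω) [IsProbabilityMeasure μ]
    (F : Filtration ℕ m0) (q : ℕ)
    (Λ : ℕ → Ω → EuclideanSpace ℝ (Fin q))
    (hadapted : Adapted F Λ)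
    (γ s c₀ c : ℝ) (hγ : 2 < γ) (hs : 1 ≤ s) (hc₀ : 0 < c₀) (hc : 0 < c)
    (hint : ∀ n, Integrable (fun ω => ‖Λ n ω‖ ^ γ) μ)
    (hdrift : ∀ n : ℕ, ∀ᵐ ω ∂μ,
      (μ[fun ω => ‖Λ (n + 1) ω‖ ^ γ | F n]) ω
        ≤ ‖Λ n ω‖ ^ γ - γ * c₀ * ‖Λ n ω‖ ^ (γ - 1)
          + c * (s ^ (γ / 2) + s * ‖Λ n ω‖ ^ (γ - 2))) :
    ∃ C : ℝ, 0 < C ∧ ∀ n : ℕ,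
      ∫ ω, ‖Λ n ω‖ ^ γ ∂μ ≤ (∫ ω, ‖Λ 0 ω‖ ^ γ ∂μ) + C * n * s ^ (γ - 1) := by
  have hγ0 : (0:ℝ) < γ := by linarith
  set C : ℝ := c * (1 + (c / (γ * c₀)) ^ (γ - 2)) with hC
  have hC0 : 0 < C := by positivity
  refine ⟨C, hC0, fun n => ?_⟩
  have hs0 : (0:ℝ) < s := by linarith
  have hterm : 0 ≤ C * s ^ (γ - 1) := by positivity
  -- one-step bound
  have hstep : ∀ n : ℕ,
      ∫ ω, ‖Λ (n + 1) ω‖ ^ γ ∂μ ≤ (∫ ω, ‖Λ n ω‖ ^ γ ∂μ) + C * s ^ (γ - 1) := by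
    intro n
    have hae : ∀ᵐ ω ∂μ,
        (μ[fun ω => ‖Λ (n + 1) ω‖ ^ γ | F n]) ω
          ≤ ‖Λ n ω‖ ^ γ + C * s ^ (γ - 1) := by
      filter_upwards [hdrift n] with ω hω
      exact hω.trans (key_pointwise γ s c₀ c hγ hs hc₀ hc _ (norm_nonneg _))
    calc ∫ ω, ‖Λ (n + 1) ω‖ ^ γ ∂μ
        = ∫ ω, (μ[fun ω => ‖Λ (n + 1) ω‖ ^ γ | F n]) ω ∂μ :=
          (integral_condExp (F.le n)).symm
      _ ≤ ∫ ω, (‖Λ n ω‖ ^ γ + C * s ^ (γ - 1)) ∂μ :=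
          integral_mono_ae integrable_condExp ((hint n).add (integrable_const _)) hae
      _ = (∫ ω, ‖Λ n ω‖ ^ γ ∂μ) + C * s ^ (γ - 1) := by
          rw [integral_add (hint n) (integrable_const _), integral_const]
          simp
  induction n with
  | zero => simp
  | succ k ih =>
    calc ∫ ω, ‖Λ (k + 1) ω‖ ^ γ ∂μ
        ≤ (∫ ω, ‖Λ k ω‖ ^ γ ∂μ) + C * s ^ (γ - 1) := hstep k
      _ ≤ (∫ ω, ‖Λ 0 ω‖ ^ γ ∂μ) + C * k * s ^ (γ - 1) + C * s ^ (γ - 1) := by linarith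
      _ = (∫ ω, ‖Λ 0 ω‖ ^ γ ∂μ) + C * (k + 1 : ℕ) * s ^ (γ - 1) := by
          push_cast; ring
end

section
/- Let γ > 2, s ≥ 1, and c₁, c₂, C > 0. Let (a_n)_{n≥0}, (b_n)_{n≥0}, (g_n)_{n≥0} be sequences of nonnegative real numbers satisfying for all n ≥ 0: (i) a_{n+1} ≤ a_n − c₁b_n + c₂s; (ii) a_n ≤ g_n^{1/(γ−1)} · b_n^{(γ−2)/(γ−1)}; (iii) g_n ≤ C(n+1)s^{γ−1}; and (iv) a_0 ≤ Cs. Then there exists a constant C' > 0, depending only on γ, c₁, c₂, and C, such that a_n ≤ C'(n+1)^{1/(γ−1)} s^{(2γ−3)/(γ−1)} for all n ≥ 0. -/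
/-- Real-sequence recursion lemma abstracting the second-moment rate of the imbalance
measure: under (i)-(iv), `a_n ≤ C'(n+1)^{1/(γ−1)} s^{(2γ−3)/(γ−1)}`. -/
theorem sequence_recursion_rate
    (γ s c₁ c₂ C : ℝ) (hγ : 2 < γ) (hs : 1 ≤ s)
    (hc₁ : 0 < c₁) (hc₂ : 0 < c₂) (hC : 0 < C)
    (a b g : ℕ → ℝ)
    (ha : ∀ n, 0 ≤ a n) (hb : ∀ n, 0 ≤ b n) (hg : ∀ n, 0 ≤ g n)
    (h1 : ∀ n, a (n + 1) ≤ a n - c₁ * b n + c₂ * s)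
    (h2 : ∀ n, a n ≤ g n ^ (1 / (γ - 1)) * b n ^ ((γ - 2) / (γ - 1)))
    (h3 : ∀ n : ℕ, g n ≤ C * ((n : ℝ) + 1) * s ^ (γ - 1))
    (h4 : a 0 ≤ C * s) :
    ∃ C' : ℝ, 0 < C' ∧ ∀ n : ℕ,
      a n ≤ C' * ((n : ℝ) + 1) ^ (1 / (γ - 1)) * s ^ ((2 * γ - 3) / (γ - 1)) := by
  have hγ1 : (0:ℝ) < γ - 1 := by linarith
  have hγ2 : (0:ℝ) < γ - 2 := by linarith
  have hγ1' : γ - 1 ≠ 0 := ne_of_gt hγ1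
  have hs0 : (0:ℝ) < s := lt_of_lt_of_le one_pos hs
  set K : ℝ := (c₂ / c₁) ^ ((γ - 2) / (γ - 1)) * C ^ (1 / (γ - 1)) with hK
  have hKpos : 0 < K := by
    apply mul_pos <;> apply Real.rpow_pos_of_pos
    · exact div_pos hc₂ hc₁
    · exact hC
  refine ⟨max C (c₂ + K), lt_max_of_lt_left hC, ?_⟩
  set C' : ℝ := max C (c₂ + K) with hC'
  have hC'pos : 0 < C' := lt_max_of_lt_left hC
  -- s ≤ s ^ ((2γ-3)/(γ-1))
  have hse : s ≤ s ^ ((2 * γ - 3) / (γ - 1)) := by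
    nth_rewrite 1 [← Real.rpow_one s]
    apply Real.rpow_le_rpow_of_exponent_le hs
    rw [le_div_iff₀ hγ1]; linarith
  have hT : ∀ n : ℕ, (1:ℝ) ≤ ((n : ℝ) + 1) ^ (1 / (γ - 1)) := by
    intro n
    apply Real.one_le_rpow (by have : (0:ℝ) ≤ (n:ℝ) := Nat.cast_nonneg n; linarith) (by positivity)
  have hTpos : ∀ n : ℕ, (0:ℝ) < ((n : ℝ) + 1) ^ (1 / (γ - 1)) * s ^ ((2 * γ - 3) / (γ - 1)) := by
    intro n; positivity
  have hsT : ∀ n : ℕ, s ≤ ((n : ℝ) + 1) ^ (1 / (γ - 1)) * s ^ ((2 * γ - 3) / (γ - 1)) := by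
    intro n
    calc s ≤ s ^ ((2 * γ - 3) / (γ - 1)) := hse
    _ ≤ _ := le_mul_of_one_le_left (by positivity) (hT n)
  have hTmono : ∀ n : ℕ, ((n : ℝ) + 1) ^ (1 / (γ - 1)) ≤ (((n : ℝ) + 1) + 1) ^ (1 / (γ - 1)) := by
    intro n
    apply Real.rpow_le_rpow (by positivity) (by linarith) (by positivity)
  intro n
  induction n with
  | zero =>
    simp only [Nat.cast_zero, zero_add, Real.one_rpow, mul_one]
    calc a 0 ≤ C * s := h4
    _ ≤ C' * s := by
        apply mul_le_mul_of_nonneg_right (le_max_left _ _) hs0.le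
    _ ≤ C' * s ^ ((2 * γ - 3) / (γ - 1)) := by
        exact mul_le_mul_of_nonneg_left hse hC'pos.le
  | succ n ih =>
    push_cast
    set T : ℝ := (((n : ℝ) + 1) + 1) ^ (1 / (γ - 1)) * s ^ ((2 * γ - 3) / (γ - 1)) with hTdef
    have hTn : ((n : ℝ) + 1) ^ (1 / (γ - 1)) * s ^ ((2 * γ - 3) / (γ - 1)) ≤ T := by
      exact mul_le_mul_of_nonneg_right (hTmono n) (by positivity)
    have hTpos' : 0 < T := hTpos (n + 1) |>.trans_le (by push_cast; exact le_refl _)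
    rcases le_or_gt (a n) ((C' - c₂) * T) with hcase | hcase
    · -- small case
      have := h1 n
      have hb' : 0 ≤ c₁ * b n := mul_nonneg hc₁.le (hb n)
      have hsT' : c₂ * s ≤ c₂ * T := by
        apply mul_le_mul_of_nonneg_left _ hc₂.le
        have := hsT (n + 1); push_cast at this; exact this
      calc a (n + 1) ≤ a n - c₁ * b n + c₂ * s := h1 n
      _ ≤ a n + c₂ * s := by linarith
      _ ≤ (C' - c₂) * T + c₂ * T := by linarith
      _ = C' * T := by ring
      _ = C' * ((((n : ℝ) + 1) + 1) ^ (1 / (γ - 1)) * s ^ ((2 * γ - 3) / (γ - 1))) := rfl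
      _ = _ := by ring
    · -- large case : show c₂ * s ≤ c₁ * b n
      have hKle : K ≤ C' - c₂ := by
        have : c₂ + K ≤ C' := le_max_right _ _
        linarith
      have han : K * T ≤ a n := by
        calc K * T ≤ (C' - c₂) * T := mul_le_mul_of_nonneg_right hKle hTpos'.le
        _ ≤ a n := hcase.le
      have hanTn : K * (((n : ℝ) + 1) ^ (1 / (γ - 1)) * s ^ ((2 * γ - 3) / (γ - 1))) ≤ a n := by
        calc _ ≤ K * T := mul_le_mul_of_nonneg_left hTn hKpos.le
        _ ≤ a n := han
      -- raise h2 to power γ-1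
      have hpow : a n ^ (γ - 1) ≤ g n * b n ^ (γ - 2) := by
        calc a n ^ (γ - 1)
            ≤ (g n ^ (1 / (γ - 1)) * b n ^ ((γ - 2) / (γ - 1))) ^ (γ - 1) := by
              apply Real.rpow_le_rpow (ha n) (h2 n) hγ1.le
        _ = g n * b n ^ (γ - 2) := by
              rw [Real.mul_rpow (Real.rpow_nonneg (hg n) _) (Real.rpow_nonneg (hb n) _),
                ← Real.rpow_mul (hg n), ← Real.rpow_mul (hb n),
                one_div_mul_cancel hγ1', div_mul_cancel₀ _ hγ1', Real.rpow_one]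
      -- lower bound on a n ^ (γ-1)
      have hlow : (c₂ / c₁ * s) ^ (γ - 2) * (C * ((n : ℝ) + 1) * s ^ (γ - 1))
          ≤ a n ^ (γ - 1) := by
        have h' : (K * (((n : ℝ) + 1) ^ (1 / (γ - 1)) * s ^ ((2 * γ - 3) / (γ - 1)))) ^ (γ - 1)
            ≤ a n ^ (γ - 1) :=
          Real.rpow_le_rpow (by positivity) hanTn hγ1.le
        have heq : (K * (((n : ℝ) + 1) ^ (1 / (γ - 1)) * s ^ ((2 * γ - 3) / (γ - 1)))) ^ (γ - 1)
            = (c₂ / c₁) ^ (γ - 2) * C * (((n : ℝ) + 1) * s ^ (2 * γ - 3)) := by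
          rw [hK]
          rw [Real.mul_rpow (by positivity) (by positivity),
            Real.mul_rpow (by positivity) (by positivity),
            Real.mul_rpow (by positivity) (by positivity),
            ← Real.rpow_mul (by positivity : (0:ℝ) ≤ c₂ / c₁),
            ← Real.rpow_mul hC.le,
            ← Real.rpow_mul (by positivity : (0:ℝ) ≤ (n:ℝ) + 1),
            ← Real.rpow_mul hs0.le,
            div_mul_cancel₀ _ hγ1', one_div_mul_cancel hγ1', div_mul_cancel₀ _ hγ1',
            Real.rpow_one, Real.rpow_one]
        rw [heq] at h'
        refine le_trans (le_of_eq ?_) h'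
        rw [Real.mul_rpow (by positivity) hs0.le]
        rw [show (2:ℝ) * γ - 3 = (γ - 2) + (γ - 1) by ring, Real.rpow_add hs0]
        ring
      -- cancel C(n+1)s^{γ-1}
      have hbn : c₂ / c₁ * s ≤ b n := by
        have hgpos : (0:ℝ) < C * ((n : ℝ) + 1) * s ^ (γ - 1) := by positivity
        have hkey : (c₂ / c₁ * s) ^ (γ - 2) * (C * ((n : ℝ) + 1) * s ^ (γ - 1))
            ≤ b n ^ (γ - 2) * (C * ((n : ℝ) + 1) * s ^ (γ - 1)) := by
          calc _ ≤ a n ^ (γ - 1) := hlow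
          _ ≤ g n * b n ^ (γ - 2) := hpow
          _ ≤ (C * ((n : ℝ) + 1) * s ^ (γ - 1)) * b n ^ (γ - 2) := by
              apply mul_le_mul_of_nonneg_right (h3 n) (Real.rpow_nonneg (hb n) _)
          _ = _ := by ring
        have := le_of_mul_le_mul_right hkey hgpos
        exact (Real.rpow_le_rpow_iff (by positivity) (hb n) hγ2).mp this
      have hcb : c₂ * s ≤ c₁ * b n := by
        rw [div_mul_eq_mul_div, div_le_iff₀ hc₁] at hbn
        linarith
      calc a (n + 1) ≤ a n - c₁ * b n + c₂ * s := h1 n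
      _ ≤ a n := by linarith
      _ ≤ C' * (((n : ℝ) + 1) ^ (1 / (γ - 1)) * s ^ ((2 * γ - 3) / (γ - 1))) := by
          have := ih; linarith [mul_le_mul_of_nonneg_left (le_refl (0:ℝ)) (le_refl (0:ℝ))]
      _ ≤ C' * T := mul_le_mul_of_nonneg_left hTn hC'pos.le
      _ = _ := by rw [hTdef]; ring
end

section
/- Let γ > 2, s ≥ 1, and c₀, c₀', c, c' > 0. Let (Ω, F, P) be a probability space with filtration (F_n)_{n≥0}, and let (Λ_n)_{n≥0} be an adapted sequence of random vectors in ℝ^q with E‖Λ_n‖₂^γ < ∞ for all n, E‖Λ_0‖₂^γ ≤ c·s^{γ−1}, E‖Λ_0‖₂² ≤ c·s, and satisfying almost surely for every n ≥ 0 the two drift conditions: E[‖Λ_{n+1}‖₂^γ | F_n] ≤ ‖Λ_n‖₂^γ − γc₀‖Λ_n‖₂^{γ−1} + c(s^{γ/2} + s‖Λ_n‖₂^{γ−2}) and E[‖Λ_{n+1}‖₂² | F_n] ≤ ‖Λ_n‖₂² − c₀'‖Λ_n‖₂ + c's. Then there exists a constant C > 0, depending only on γ, c₀, c₀', c, c',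 such that E‖Λ_n‖₂² ≤ C(n+1)^{1/(γ−1)} s^{(2γ−3)/(γ−1)} for all n ≥ 0. -/
/-!
Taking expectations in the first drift condition, after Young's inequality has absorbed
`c s ‖Λ_n‖^(γ-2)` into the negative drift, shows that `E‖Λ_n‖^γ` grows at most linearly,
`E‖Λ_n‖^γ ≤ K (n+1) s^(γ-1)`. Taking expectations in the second shows that `E‖Λ_n‖²` can increase,
and then by at most `c' s`, only when `c₀' E‖Λ_n‖ < c' s`. In that case the interpolation
`t² ≤ l t + t^γ / l^(γ-2)`, with `l` proportional to `E‖Λ_n‖²`, forces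
`(E‖Λ_n‖²)^(γ-1) ≲ s^(γ-2) E‖Λ_n‖^γ ≲ (n+1) s^(2γ-3)`.
-/

open MeasureTheory

lemma rpow_le_one_add_rpow {p γ t : ℝ} (ht : 0 ≤ t) (hp : 0 ≤ p) (hpγ : p ≤ γ) :
    t ^ p ≤ 1 + t ^ γ := by
  rcases le_or_gt t 1 with h | h
  · linarith [Real.rpow_le_one ht h hp, Real.rpow_nonneg ht γ]
  · linarith [Real.rpow_le_rpow_of_exponent_le h.le hpγ]

lemma mul_rpow_le_mul_rpow_add_mul_rpow {x y κ p : ℝ} (hx : 0 ≤ x) (hy : 0 ≤ y) (hκ : 0 < κ)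
    (hp : 0 ≤ p) : y * x ^ p ≤ κ * x ^ (p + 1) + κ * (y / κ) ^ (p + 1) := by
  have hp1 : p + 1 ≠ 0 := by linarith
  rcases le_or_gt x (y / κ) with h | h
  · calc y * x ^ p ≤ y * (y / κ) ^ p := by gcongr
      _ = κ * (y / κ) ^ (p + 1) := by
        rw [Real.rpow_add_one' (by positivity) hp1]; field_simp
      _ ≤ _ := le_add_of_nonneg_left (by positivity)
  · have hy : y ≤ κ * x := by rw [div_lt_iff₀' hκ] at h; exact h.le
    calc y * x ^ p ≤ κ * x * x ^ p := by gcongr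
      _ = κ * x ^ (p + 1) := by rw [Real.rpow_add_one' hx hp1]; ring
      _ ≤ _ := le_add_of_nonneg_right (by positivity)

lemma rpow_drift_le_rpow_add {γ c₀ c s t : ℝ} (hγ : 2 ≤ γ) (hs : 1 ≤ s) (hc₀ : 0 < c₀)
    (hc : 0 ≤ c) (ht : 0 ≤ t) :
    t ^ γ - γ * c₀ * t ^ (γ - 1) + c * (s ^ (γ / 2) + s * t ^ (γ - 2))
      ≤ t ^ γ + (c + γ * c₀ * (c / (γ * c₀)) ^ (γ - 1)) * s ^ (γ - 1) := by
  have hyoung := mul_rpow_le_mul_rpow_add_mul_rpow ht (by positivity : 0 ≤ c * s)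
    (by positivity : 0 < γ * c₀) (by linarith : 0 ≤ γ - 2)
  rw [show γ - 2 + 1 = γ - 1 by ring, mul_div_right_comm,
    Real.mul_rpow (by positivity) (by positivity)] at hyoung
  have hs_pow : s ^ (γ / 2) ≤ s ^ (γ - 1) := Real.rpow_le_rpow_of_exponent_le hs (by linarith)
  have : c * s ^ (γ / 2) ≤ c * s ^ (γ - 1) := by gcongr
  linarith

lemma sq_le_mul_add_rpow_div_rpow {γ l t : ℝ} (hγ : 2 ≤ γ) (hl : 0 < l) (ht : 0 ≤ t) :
    t ^ 2 ≤ l * t + t ^ γ / l ^ (γ - 2) := by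
  rcases le_or_gt t l with h | h
  · have : t ^ 2 ≤ l * t := by nlinarith
    linarith [show 0 ≤ t ^ γ / l ^ (γ - 2) by positivity]
  · have hsplit : t ^ γ = t ^ 2 * t ^ (γ - 2) := by
      rw [← Real.rpow_two, ← Real.rpow_add (hl.trans h)]; ring_nf
    have : t ^ 2 ≤ t ^ γ / l ^ (γ - 2) := by
      rw [le_div_iff₀ (by positivity), hsplit]
      gcongr
    linarith [mul_nonneg hl.le ht]

lemma rpow_le_of_forall_le_mul_add_div_rpow {a b M r γ : ℝ} (hγ : 2 ≤ γ) (ha : 0 ≤ a)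
    (hb : 0 ≤ b) (hr : 0 < r) (hM : 2 * M < r)
    (h : ∀ l > 0, b ≤ l * M + a / l ^ (γ - 2)) : b ^ (γ - 1) ≤ 2 * r ^ (γ - 2) * a := by
  rcases hb.eq_or_lt with rfl | hb
  · rw [Real.zero_rpow (by linarith)]; positivity
  -- the interpolation at `l = b / r` makes the first term at most `b / 2`
  have hl := h (b / r) (by positivity)
  have hlM : b / r * M < b / 2 := by
    rw [div_mul_eq_mul_div, div_lt_iff₀ hr]; nlinarith
  have hhalf : b / 2 * b ^ (γ - 2) < a * r ^ (γ - 2) := by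
    have : b / 2 < a / (b / r) ^ (γ - 2) := by linarith
    rwa [Real.div_rpow hb.le hr.le, div_div_eq_mul_div,
      lt_div_iff₀ (by positivity)] at this
  rw [show γ - 1 = γ - 2 + 1 by ring, Real.rpow_add_one' hb.le (by linarith)]
  linarith

lemma le_max_of_succ_le_max {α : Type*} [LinearOrder α] {b B : ℕ → α} (hB : Monotone B)
    (h : ∀ n, b (n + 1) ≤ max (b n) (B n)) (n : ℕ) : b n ≤ max (b 0) (B n) := by
  induction n with
  | zero => exact le_max_left _ _
  | succ n ih =>
    have hBn := hB n.le_succ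
    exact (h n).trans (max_le (ih.trans (max_le_max le_rfl hBn)) (hBn.trans (le_max_right _ _)))

lemma max_le_mul_rpow_mul_rpow {γ s c c' G b₀ x : ℝ} (hγ : 2 ≤ γ) (hs : 1 ≤ s) (hc : 0 ≤ c)
    (hc' : 0 ≤ c') (hG : 0 ≤ G) (hx : 1 ≤ x) (hb₀ : b₀ ≤ c * s) :
    max b₀ ((G * x * s ^ (2 * γ - 3)) ^ (1 / (γ - 1)) + c' * s)
      ≤ (G ^ (1 / (γ - 1)) + c + c') * x ^ (1 / (γ - 1)) * s ^ ((2 * γ - 3) / (γ - 1)) := by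
  have hι : 0 ≤ 1 / (γ - 1) := by rw [one_div_nonneg]; linarith
  rw [Real.mul_rpow (by positivity) (by positivity), Real.mul_rpow hG (by linarith),
    ← Real.rpow_mul (by linarith), mul_one_div]
  set R := x ^ (1 / (γ - 1)) * s ^ ((2 * γ - 3) / (γ - 1))
  have hsR : s ≤ R := by
    have hx1 : 1 ≤ x ^ (1 / (γ - 1)) := Real.one_le_rpow hx hι
    have hs1 : s ≤ s ^ ((2 * γ - 3) / (γ - 1)) :=
      Real.self_le_rpow_of_one_le hs (by rw [le_div_iff₀ (by linarith)]; linarith)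
    nlinarith
  have hGR : 0 ≤ G ^ (1 / (γ - 1)) * R := by positivity
  have hcR : c * s ≤ c * R := mul_le_mul_of_nonneg_left hsR hc
  have hc'R : c' * s ≤ c' * R := mul_le_mul_of_nonneg_left hsR hc'
  refine max_le ?_ ?_ <;> nlinarith

section Moments

variable {Ω E : Type*} {m m0 : MeasurableSpace Ω} {μ : Measure Ω} [NormedAddCommGroup E]

lemma integrable_norm_rpow_of_le [IsFiniteMeasure μ] {X : Ω → E} {p γ : ℝ}
    (hX : AEStronglyMeasurable X μ) (hXγ : Integrable (fun ω => ‖X ω‖ ^ γ) μ) (hp : 0 ≤ p)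
    (hpγ : p ≤ γ) : Integrable (fun ω => ‖X ω‖ ^ p) μ := by
  refine ((integrable_const 1).add hXγ).mono'
    (hX.norm.aemeasurable.pow_const p).aestronglyMeasurable (ae_of_all _ fun ω => ?_)
  rw [Real.norm_of_nonneg (by positivity)]
  exact rpow_le_one_add_rpow (norm_nonneg _) hp hpγ

lemma integral_sq_norm_le_mul_add [IsFiniteMeasure μ] {X : Ω → E} {γ l : ℝ} (hγ : 2 ≤ γ)
    (hl : 0 < l) (hX : AEStronglyMeasurable X μ) (hXγ : Integrable (fun ω => ‖X ω‖ ^ γ) μ) :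
    ∫ ω, ‖X ω‖ ^ 2 ∂μ ≤ l * ∫ ω, ‖X ω‖ ∂μ + (∫ ω, ‖X ω‖ ^ γ ∂μ) / l ^ (γ - 2) := by
  have hX1 : Integrable (fun ω => ‖X ω‖) μ := by
    simpa using integrable_norm_rpow_of_le hX hXγ zero_le_one (by linarith)
  have hrhs : Integrable (fun ω => l * ‖X ω‖ + ‖X ω‖ ^ γ / l ^ (γ - 2)) μ :=
    (hX1.const_mul l).add (hXγ.div_const _)
  calc ∫ ω, ‖X ω‖ ^ 2 ∂μ ≤ ∫ ω, (l * ‖X ω‖ + ‖X ω‖ ^ γ / l ^ (γ - 2)) ∂μ :=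
        integral_mono_of_nonneg (ae_of_all _ fun ω => by positivity) hrhs
          (ae_of_all _ fun ω => sq_le_mul_add_rpow_div_rpow hγ hl (norm_nonneg _))
    _ = _ := by
      rw [integral_add (hX1.const_mul l) (hXγ.div_const _), integral_const_mul, integral_div]

lemma integral_le_integral_of_condExp_le (hm : m ≤ m0) [SigmaFinite (μ.trim hm)]
    {f g : Ω → ℝ} (hg : Integrable g μ) (h : μ[f | m] ≤ᵐ[μ] g) :
    ∫ ω, f ω ∂μ ≤ ∫ ω, g ω ∂μ := by
  rw [← integral_condExp hm]
  exact integral_mono_ae integrable_condExp hg h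

lemma integral_le_add_mul_of_condExp_le_add [IsProbabilityMeasure μ] {F : Filtration ℕ m0}
    {f : ℕ → Ω → ℝ} {d : ℝ} (hf : ∀ n, Integrable (f n) μ)
    (h : ∀ n, μ[f (n + 1) | F n] ≤ᵐ[μ] fun ω => f n ω + d) (n : ℕ) :
    ∫ ω, f n ω ∂μ ≤ ∫ ω, f 0 ω ∂μ + n * d := by
  induction n with
  | zero => simp
  | succ n ih =>
    have hstep := integral_le_integral_of_condExp_le (g := fun ω => f n ω + d) (F.le n)
      ((hf n).add (integrable_const d)) (h n)
    rw [integral_add (hf n) (integrable_const d), integral_const, probReal_univ, one_smul] at hstep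
    push_cast
    linarith

lemma integral_sq_norm_le_max_of_condExp_le [IsProbabilityMeasure μ] (hm : m ≤ m0)
    {X Y : Ω → E} {γ κ β a T : ℝ} (hγ : 2 ≤ γ) (hκ : 0 < κ) (hβ : 0 < β)
    (hX : AEStronglyMeasurable X μ) (hXγ : Integrable (fun ω => ‖X ω‖ ^ γ) μ)
    (ha : ∫ ω, ‖X ω‖ ^ γ ∂μ ≤ a) (hT : 0 ≤ T)
    (haT : 2 * (2 * β / κ) ^ (γ - 2) * a ≤ T ^ (γ - 1))
    (hdrift : μ[fun ω => ‖Y ω‖ ^ 2 | m] ≤ᵐ[μ] fun ω => ‖X ω‖ ^ 2 - κ * ‖X ω‖ + β) :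
    ∫ ω, ‖Y ω‖ ^ 2 ∂μ ≤ max (∫ ω, ‖X ω‖ ^ 2 ∂μ) (T + β) := by
  have hX1 : Integrable (fun ω => ‖X ω‖) μ := by
    simpa using integrable_norm_rpow_of_le hX hXγ zero_le_one (by linarith)
  have hX2 : Integrable (fun ω => ‖X ω‖ ^ 2) μ := by
    simpa using integrable_norm_rpow_of_le hX hXγ zero_le_two hγ
  have hdec : ∫ ω, ‖Y ω‖ ^ 2 ∂μ ≤ ∫ ω, ‖X ω‖ ^ 2 ∂μ - κ * ∫ ω, ‖X ω‖ ∂μ + β := by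
    have hsub : Integrable (fun ω => ‖X ω‖ ^ 2 - κ * ‖X ω‖) μ := hX2.sub (hX1.const_mul κ)
    have := integral_le_integral_of_condExp_le (g := fun ω => ‖X ω‖ ^ 2 - κ * ‖X ω‖ + β) hm
      (hsub.add (integrable_const β)) hdrift
    rwa [integral_add hsub (integrable_const β), integral_sub hX2 (hX1.const_mul κ),
      integral_const_mul, integral_const, probReal_univ, one_smul] at this
  have hM : 0 ≤ ∫ ω, ‖X ω‖ ∂μ := integral_nonneg fun ω => norm_nonneg _
  rcases le_or_gt β (κ * ∫ ω, ‖X ω‖ ∂μ) with hlarge | hsmall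
  · exact le_max_of_le_left (by linarith)
  refine le_max_of_le_right (hdec.trans ?_)
  have hr : 2 * ∫ ω, ‖X ω‖ ∂μ < 2 * β / κ := by rw [lt_div_iff₀ hκ]; linarith
  have hpow := rpow_le_of_forall_le_mul_add_div_rpow hγ
    (integral_nonneg fun ω => by positivity) (integral_nonneg fun ω => by positivity)
    (by positivity) hr (fun l hl => integral_sq_norm_le_mul_add hγ hl hX hXγ)
  have hbT : ∫ ω, ‖X ω‖ ^ 2 ∂μ ≤ T := by
    rw [← Real.rpow_le_rpow_iff (integral_nonneg fun ω => by positivity) hT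
      (by linarith : (0 : ℝ) < γ - 1)]
    exact hpow.trans ((mul_le_mul_of_nonneg_left ha (by positivity)).trans haT)
  nlinarith [mul_nonneg hκ.le hM]

lemma integral_norm_rpow_le_of_drift [IsProbabilityMeasure μ] {F : Filtration ℕ m0}
    {Λ : ℕ → Ω → E} {γ s c₀ c : ℝ} (hγ : 2 ≤ γ) (hs : 1 ≤ s) (hc₀ : 0 < c₀) (hc : 0 ≤ c)
    (hint : ∀ n, Integrable (fun ω => ‖Λ n ω‖ ^ γ) μ)
    (hinit : ∫ ω, ‖Λ 0 ω‖ ^ γ ∂μ ≤ c * s ^ (γ - 1))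
    (hdrift : ∀ n : ℕ, ∀ᵐ ω ∂μ,
      (μ[fun ω => ‖Λ (n + 1) ω‖ ^ γ | F n]) ω
        ≤ ‖Λ n ω‖ ^ γ - γ * c₀ * ‖Λ n ω‖ ^ (γ - 1)
          + c * (s ^ (γ / 2) + s * ‖Λ n ω‖ ^ (γ - 2))) (n : ℕ) :
    ∫ ω, ‖Λ n ω‖ ^ γ ∂μ
      ≤ (c + (c + γ * c₀ * (c / (γ * c₀)) ^ (γ - 1))) * (n + 1) * s ^ (γ - 1) := by
  have hlin := integral_le_add_mul_of_condExp_le_add hint (fun n => (hdrift n).mono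
    fun ω hω => hω.trans (rpow_drift_le_rpow_add hγ hs hc₀ hc (norm_nonneg _))) n
  have : 0 ≤ (c + γ * c₀ * (c / (γ * c₀)) ^ (γ - 1)) * s ^ (γ - 1) := by positivity
  have : 0 ≤ c * s ^ (γ - 1) := by positivity
  nlinarith [(n.cast_nonneg : (0 : ℝ) ≤ n)]

end Moments

/-- Under the two drift conditions for the imbalance process of the ARCS procedure, the
second moment satisfies `E‖Λ_n‖² ≤ C(n+1)^{1/(γ−1)} s^{(2γ−3)/(γ−1)}`. -/
theorem imbalance_second_moment_rate
    {Ω : Type*} {m0 : MeasurableSpace Ω} (μ : Measure Ω) [IsProbabilityMeasure μ]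
    (F : Filtration ℕ m0) (q : ℕ)
    (Λ : ℕ → Ω → EuclideanSpace ℝ (Fin q))
    (hadapted : Adapted F Λ)
    (γ s c₀ c₀' c c' : ℝ) (hγ : 2 < γ) (hs : 1 ≤ s)
    (hc₀ : 0 < c₀) (hc₀' : 0 < c₀') (hc : 0 < c) (hc' : 0 < c')
    (hint : ∀ n, Integrable (fun ω => ‖Λ n ω‖ ^ γ) μ)
    (hinit_gamma : ∫ ω, ‖Λ 0 ω‖ ^ γ ∂μ ≤ c * s ^ (γ - 1))
    (hinit_two : ∫ ω, ‖Λ 0 ω‖ ^ (2 : ℕ) ∂μ ≤ c * s)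
    (hdrift_gamma : ∀ n : ℕ, ∀ᵐ ω ∂μ,
      (μ[fun ω => ‖Λ (n + 1) ω‖ ^ γ | F n]) ω
        ≤ ‖Λ n ω‖ ^ γ - γ * c₀ * ‖Λ n ω‖ ^ (γ - 1)
          + c * (s ^ (γ / 2) + s * ‖Λ n ω‖ ^ (γ - 2)))
    (hdrift_two : ∀ n : ℕ, ∀ᵐ ω ∂μ,
      (μ[fun ω => ‖Λ (n + 1) ω‖ ^ (2 : ℕ) | F n]) ω
        ≤ ‖Λ n ω‖ ^ (2 : ℕ) - c₀' * ‖Λ n ω‖ + c' * s) :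
    ∃ C : ℝ, 0 < C ∧ ∀ n : ℕ,
      ∫ ω, ‖Λ n ω‖ ^ (2 : ℕ) ∂μ
        ≤ C * ((n : ℝ) + 1) ^ (1 / (γ - 1)) * s ^ ((2 * γ - 3) / (γ - 1)) := by
  set G := 2 * (2 * c' / c₀') ^ (γ - 2) * (c + (c + γ * c₀ * (c / (γ * c₀)) ^ (γ - 1)))
  -- `E‖Λ_n‖²` increases only from values below `T n`
  set T : ℕ → ℝ := fun n => (G * (n + 1) * s ^ (2 * γ - 3)) ^ (1 / (γ - 1))
  have hT : Monotone T := fun k n hkn => by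
    have : 0 ≤ 1 / (γ - 1) := by rw [one_div_nonneg]; linarith
    simp only [T]
    gcongr
  have hstep (n : ℕ) :
      ∫ ω, ‖Λ (n + 1) ω‖ ^ 2 ∂μ ≤ max (∫ ω, ‖Λ n ω‖ ^ 2 ∂μ) (T n + c' * s) := by
    refine integral_sq_norm_le_max_of_condExp_le (F.le n) hγ.le hc₀' (by positivity)
      ((hadapted n).mono (F.le n) le_rfl).aestronglyMeasurable (hint n)
      (integral_norm_rpow_le_of_drift hγ.le hs hc₀ hc.le hint hinit_gamma hdrift_gamma n)
      (by positivity) (le_of_eq ?_) (hdrift_two n)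
    have hsγ : s ^ (γ - 2) * s ^ (γ - 1) = s ^ (2 * γ - 3) := by
      rw [← Real.rpow_add (by linarith)]; ring_nf
    simp only [T, G]
    rw [one_div, Real.rpow_inv_rpow (by positivity) (by linarith),
      show 2 * (c' * s) / c₀' = 2 * c' / c₀' * s by ring,
      Real.mul_rpow (by positivity) (by linarith), ← hsγ]
    ring
  refine ⟨G ^ (1 / (γ - 1)) + c + c', by positivity, fun n => ?_⟩
  calc ∫ ω, ‖Λ n ω‖ ^ 2 ∂μ ≤ max (∫ ω, ‖Λ 0 ω‖ ^ 2 ∂μ) (T n + c' * s) :=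
        le_max_of_succ_le_max (b := fun n => ∫ ω, ‖Λ n ω‖ ^ 2 ∂μ)
          (hT.add_const (c' * s)) hstep n
    _ ≤ _ := max_le_mul_rpow_mul_rpow hγ.le hs hc.le hc'.le (by positivity)
          (by linarith [n.cast_nonneg (α := ℝ)]) hinit_two
end

section
/- Let n and s be positive integers, T₁,…,T_n ∈ {0,1}, and X₁,…,X_n ∈ ℝ^s. Let Σ be a symmetric positive-definite s×s real matrix whose inverse factors as Σ⁻¹ = ΓDΓ^⊤ with Γ an orthogonal s×s matrix and D a diagonal s×s matrix with nonnegative diagonal entries. Let w₀, w₁ ≥ 0 and define φ(x) = (√w₀, √w₁·D^{1/2}Γ^⊤x) ∈ ℝ^{1+s}, where D^{1/2} is the entrywise square root of D. Set n₁ = #{i : T_i = 1}, n₀ = n − n₁, S₁ = ∑_{i: T_i=1} X_i, S₀ = ∑_{i: T_i=0} X_i. Then ‖∑_{i=1}^n (2T_i − 1)φ(X_i)‖₂² = w₀(n₁ − n₀)² + w₁·(S₁ − S₀)^⊤ Σ⁻¹ (S₁ − S₀). -/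
open Finset Matrix

/-- The ARCS-M imbalance measure equals the weighted sum of the squared difference in group
sizes and the Mahalanobis-type distance between the covariate sums of the two groups. -/
theorem arcs_m_imbalance_identity
    (n s : ℕ) (hn : 0 < n) (hs : 0 < s)
    (T : Fin n → ℝ) (hT : ∀ i, T i = 0 ∨ T i = 1)
    (X : Fin n → Fin s → ℝ)
    (Sig : Matrix (Fin s) (Fin s) ℝ) (hSig : Sig.PosDef)
    (Γ : Matrix (Fin s) (Fin s) ℝ) (hΓ : Γ * Γᵀ = 1)
    (d : Fin s → ℝ) (hd : ∀ j, 0 ≤ d j)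
    (hdecomp : Sig⁻¹ = Γ * Matrix.diagonal d * Γᵀ)
    (w₀ w₁ : ℝ) (hw₀ : 0 ≤ w₀) (hw₁ : 0 ≤ w₁)
    (φ : (Fin s → ℝ) → (Unit ⊕ Fin s) → ℝ)
    (hφ : ∀ x, φ x = Sum.elim (fun _ => Real.sqrt w₀)
        (fun j => Real.sqrt w₁ * (Real.sqrt (d j) * Γᵀ.mulVec x j)))
    (n₁ n₀ : ℕ)
    (hn₁ : n₁ = (univ.filter (fun i => T i = 1)).card)
    (hn₀ : n₀ = n - n₁)
    (S₁ S₀ : Fin s → ℝ)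
    (hS₁ : S₁ = ∑ i ∈ univ.filter (fun i => T i = 1), X i)
    (hS₀ : S₀ = ∑ i ∈ univ.filter (fun i => T i = 0), X i) :
    ∑ k : Unit ⊕ Fin s, (∑ i, (2 * T i - 1) * φ (X i) k) ^ 2
      = w₀ * ((n₁ : ℝ) - (n₀ : ℝ)) ^ 2
        + w₁ * ((S₁ - S₀) ⬝ᵥ Sig⁻¹.mulVec (S₁ - S₀)) := by
  have h0 : univ.filter (fun i => ¬ T i = 1) = univ.filter (fun i : Fin n => T i = 0) := by
    apply Finset.filter_congr
    intro i _
    rcases hT i with h | h <;> simp [h]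
  -- key splitting lemma
  have key : ∀ f : Fin n → ℝ,
      ∑ i, (2 * T i - 1) * f i
        = (∑ i ∈ univ.filter (fun i => T i = 1), f i)
          - (∑ i ∈ univ.filter (fun i => T i = 0), f i) := by
    intro f
    rw [← Finset.sum_filter_add_sum_filter_not univ (fun i => T i = 1)
      (fun i => (2 * T i - 1) * f i), h0]
    rw [Finset.sum_congr rfl (g := f) (fun i hi => by
      simp only [Finset.mem_filter] at hi; rw [hi.2]; ring)]
    nth_rewrite 2 [Finset.sum_congr rfl (g := fun i => -f i) (fun i hi => by
      simp only [Finset.mem_filter] at hi; rw [hi.2]; ring)]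
    rw [Finset.sum_neg_distrib]
    ring
  have hcard : n₁ + (univ.filter (fun i : Fin n => T i = 0)).card = n := by
    rw [hn₁, ← h0, Finset.card_filter_add_card_filter_not, Finset.card_univ,
      Fintype.card_fin]
  have hn₁le : n₁ ≤ n := by omega
  have hcard0 : ((univ.filter (fun i : Fin n => T i = 0)).card : ℝ) = (n₀ : ℝ) := by
    have : (univ.filter (fun i : Fin n => T i = 0)).card = n₀ := by omega
    exact_mod_cast this
  -- set V := S₁ - S₀
  set V : Fin s → ℝ := S₁ - S₀ with hV
  have hVsum : ∀ j, ∑ i, (2 * T i - 1) * (Γᵀ.mulVec (X i) j) = Γᵀ.mulVec V j := by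
    intro j
    rw [key]
    have hlin : ∀ (A : Finset (Fin n)), ∑ i ∈ A, Γᵀ.mulVec (X i) j
        = Γᵀ.mulVec (∑ i ∈ A, X i) j := by
      intro A
      simp only [Matrix.mulVec, dotProduct, Finset.sum_apply, Finset.mul_sum]
      rw [Finset.sum_comm]
    rw [hlin, hlin, ← hS₁, ← hS₀]
    simp only [hV, Matrix.mulVec, dotProduct, Pi.sub_apply, mul_sub,
      Finset.sum_sub_distrib]
  rw [Fintype.sum_sum_type]
  have hunit : ∑ u : Unit, (∑ i, (2 * T i - 1) * φ (X i) (Sum.inl u)) ^ 2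
      = w₀ * ((n₁ : ℝ) - (n₀ : ℝ)) ^ 2 := by
    simp only [hφ, Sum.elim_inl, Finset.univ_unique, Finset.sum_singleton]
    have : ∑ i, (2 * T i - 1) * Real.sqrt w₀
        = ((n₁ : ℝ) - (n₀ : ℝ)) * Real.sqrt w₀ := by
      rw [key (fun _ => Real.sqrt w₀)]
      rw [Finset.sum_const, Finset.sum_const, nsmul_eq_mul, nsmul_eq_mul, ← hn₁, hcard0]
      ring
    rw [this, mul_pow, Real.sq_sqrt hw₀]
    ring
  have hfin : ∑ j : Fin s, (∑ i, (2 * T i - 1) * φ (X i) (Sum.inr j)) ^ 2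
      = w₁ * (V ⬝ᵥ Sig⁻¹.mulVec V) := by
    have hterm : ∀ j, ∑ i, (2 * T i - 1) * φ (X i) (Sum.inr j)
        = Real.sqrt w₁ * Real.sqrt (d j) * (Γᵀ.mulVec V j) := by
      intro j
      simp only [hφ, Sum.elim_inr]
      rw [← hVsum j, Finset.mul_sum]
      apply Finset.sum_congr rfl
      intro i _
      ring
    simp only [hterm]
    have hrhs : V ⬝ᵥ Sig⁻¹.mulVec V = ∑ j, d j * (Γᵀ.mulVec V j) ^ 2 := by
      rw [hdecomp]
      rw [← Matrix.mulVec_mulVec, ← Matrix.mulVec_mulVec]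
      rw [Matrix.dotProduct_mulVec, ← Matrix.mulVec_transpose]
      simp only [dotProduct, Matrix.mulVec_diagonal]
      apply Finset.sum_congr rfl
      intro j _
      ring
    rw [hrhs, Finset.mul_sum]
    apply Finset.sum_congr rfl
    intro j _
    rw [mul_pow, mul_pow, Real.sq_sqrt hw₁, Real.sq_sqrt (hd j)]
    ring
  rw [hunit, hfin]
end
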